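/- arXiv:math-ph/0603008 — 9 statements merged into one kernel-verified Lean document; each statement's English description precedes it below -/
import Mathlib

section
/- Let K be a field, g a Lie algebra over K, and B : g × g → K a symmetric bilinear form that is invariant, i.e. B(⁅x,y⁆,z) + B(y,⁅x,z⁆) = 0 for all x,y,z ∈ g. Define μ : g × g × g → g by μ(x,y,z) = B(x,y)z + B(y,z)x + B(z,x)y. Then (1) μ is totally symmetric and trilinear; (2) μ is equivariant for the adjoint action (identity J3): ⁅x, μ(y₁,y₂,y₃)⁆ = μ(⁅x,y₁⁆,y₂,y₃) + μ(y₁,⁅x,y₂⁆,y₃) + μ(y₁,y₂,⁅x,y₃⁆) for all x,y₁,y₂,y₃ ∈ g; and (3) μ satisfies the identity J4: ⁅μ(y₂,y₃,y₄),y₁⁆ + ⁅μ(y₁,y₃,y₄),y₂⁆ + ⁅μ(y₁,y₂,y₄),y₃⁆ + ⁅μ(y₁,y₂,y₃),y₄⁆ = 0 for all y₁,y₂,y₃,y₄ ∈ g. Consequently g₀ = g together with g₁ = g (the adjoint module) and the 3-bracket μ is an elementary Lie algebra of order 3. (In the paper this is applied to g = so(2,3) with B the Killing/trace form.) -/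
/-- The trilinear bracket `μ(x,y,z) = B(x,y)z + B(y,z)x + B(z,x)y` built from a
bilinear form `B` on a Lie algebra `g`. -/
def muForm {K : Type*} [Field K] {L : Type*} [LieRing L] [LieAlgebra K L]
    (B : L →ₗ[K] L →ₗ[K] K) (x y z : L) : L :=
  B x y • z + B y z • x + B z x • y

/-- If `B` is a symmetric invariant bilinear form on a Lie algebra `g`, then
`μ(x,y,z) = B(x,y)z + B(y,z)x + B(z,x)y` is a totally symmetric trilinear map which is
equivariant for the adjoint action (J3) and satisfies the identity J4; hence
`g₀ = g`, `g₁ = g` (the adjoint module) together with `μ` is an elementary Lie algebra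
of order 3. -/
theorem muForm_symm_trilinear_J3_J4 {K : Type*} [Field K] {L : Type*}
    [LieRing L] [LieAlgebra K L]
    (B : L →ₗ[K] L →ₗ[K] K)
    (hsymm : ∀ x y : L, B x y = B y x)
    (hinv : ∀ x y z : L, B ⁅x, y⁆ z + B y ⁅x, z⁆ = 0) :
    -- (1) μ is totally symmetric …
    (∀ x y z : L, muForm B x y z = muForm B y x z) ∧
    (∀ x y z : L, muForm B x y z = muForm B x z y) ∧
    -- … and trilinear
    (∀ (a : K) (x x' y z : L),
      muForm B (a • x + x') y z = a • muForm B x y z + muForm B x' y z) ∧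
    (∀ (a : K) (x y y' z : L),
      muForm B x (a • y + y') z = a • muForm B x y z + muForm B x y' z) ∧
    (∀ (a : K) (x y z z' : L),
      muForm B x y (a • z + z') = a • muForm B x y z + muForm B x y z') ∧
    -- (2) equivariance for the adjoint action (identity J3)
    (∀ x y₁ y₂ y₃ : L, ⁅x, muForm B y₁ y₂ y₃⁆ =
      muForm B ⁅x, y₁⁆ y₂ y₃ + muForm B y₁ ⁅x, y₂⁆ y₃ + muForm B y₁ y₂ ⁅x, y₃⁆) ∧
    -- (3) identity J4
    (∀ y₁ y₂ y₃ y₄ : L,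
      ⁅muForm B y₂ y₃ y₄, y₁⁆ + ⁅muForm B y₁ y₃ y₄, y₂⁆ +
        ⁅muForm B y₁ y₂ y₄, y₃⁆ + ⁅muForm B y₁ y₂ y₃, y₄⁆ = 0) := by

  have hinv' : ∀ x y z : L, B ⁅x, y⁆ z = -B y ⁅x, z⁆ := fun x y z => eq_neg_of_add_eq_zero_left (hinv x y z)
  refine ⟨?_, ?_, ?_, ?_, ?_, ?_, ?_⟩
  · intro x y z
    simp only [muForm, hsymm x y, hsymm z x, hsymm y z]
    abel
  · intro x y z
    simp only [muForm, hsymm x y, hsymm z x, hsymm y z]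
    abel
  · intro a x x' y z
    simp only [muForm, map_add, map_smul, LinearMap.add_apply, LinearMap.smul_apply,
      smul_eq_mul, add_smul, mul_smul, smul_add]
    module
  · intro a x y y' z
    simp only [muForm, map_add, map_smul, LinearMap.add_apply, LinearMap.smul_apply,
      smul_eq_mul, add_smul, mul_smul, smul_add]
    module
  · intro a x y z z'
    simp only [muForm, map_add, map_smul, LinearMap.add_apply, LinearMap.smul_apply,
      smul_eq_mul, add_smul, mul_smul, smul_add]
    module
  · intro x y₁ y₂ y₃
    simp only [muForm, lie_add, lie_smul, hinv' x y₁ y₂, hinv' x y₂ y₃, hinv' x y₃ y₁,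
      hsymm ⁅x, y₂⁆ y₁, hsymm ⁅x, y₃⁆ y₂, hsymm y₃ ⁅x, y₁⁆, neg_smul]
    abel
  · intro y₁ y₂ y₃ y₄
    simp only [muForm, add_lie, smul_lie, hsymm y₂ y₁, hsymm y₃ y₁, hsymm y₄ y₁,
      hsymm y₃ y₂, hsymm y₄ y₂, hsymm y₄ y₃,
      ← lie_skew y₂ y₁, ← lie_skew y₃ y₁, ← lie_skew y₄ y₁,
      ← lie_skew y₃ y₂, ← lie_skew y₄ y₂, ← lie_skew y₄ y₃, smul_neg]
    abel
end

section
/- Let η = diag(1,−1,−1,−1) be the 4×4 Minkowski matrix over ℝ, and let p(1,3) be the Poincaré algebra, realized as the Lie subalgebra of gl(5,ℝ) of block matrices M(A,b) = [[A,b],[0,0]] with A a 4×4 real matrix satisfying Aᵀη + ηA = 0 and b ∈ ℝ⁴. Let g₁ = ℝ⁴ be the vector representation of p(1,3), with action M(A,b)·v = A v (so translations act trivially). Write τ(b) = M(0,b) and ⟨u,v⟩_η = uᵀηv. Then the map μ(u,v,w) = ⟨u,v⟩_η τ(w) + ⟨v,w⟩_η τ(u) + ⟨w,u⟩_η τ(v)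 is a totally symmetric trilinear map g₁³ → p(1,3) satisfying the equivariance identity J3 and the identity J4; hence p(1,3) ⊕ ℝ⁴ with this 3-bracket is an elementary Lie algebra of order 3 (the Poincaré algebra of order 3 of Example 2.5, with brackets {V_m,V_n,V_r} = η_{mn}P_r + η_{mr}P_n + η_{rn}P_m). -/
/-- The Minkowski metric `η = diag(1,−1,−1,−1)` over `ℝ`. -/
def etaR : Matrix (Fin 4) (Fin 4) ℝ := Matrix.diagonal ![1, -1, -1, -1]

/-- The block matrix `M(A,b) = [[A,b],[0,0]] ∈ gl(5,ℝ)`; the Poincaré algebra `p(1,3)`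
is the Lie subalgebra of such matrices with `Aᵀη + ηA = 0`. -/
def MblkR (A : Matrix (Fin 4) (Fin 4) ℝ) (b : Fin 4 → ℝ) :
    Matrix (Fin 4 ⊕ Fin 1) (Fin 4 ⊕ Fin 1) ℝ :=
  Matrix.fromBlocks A (Matrix.of fun i _ => b i) 0 0

/-- `⟨u,v⟩_η = uᵀ η v`. -/
def innR (u v : Fin 4 → ℝ) : ℝ := dotProduct u (etaR.mulVec v)

/-- The 3-bracket `μ(u,v,w) = ⟨u,v⟩_η τ(w) + ⟨v,w⟩_η τ(u) + ⟨w,u⟩_η τ(v)`,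
where `τ(b) = M(0,b)`. -/
def muP (u v w : Fin 4 → ℝ) : Matrix (Fin 4 ⊕ Fin 1) (Fin 4 ⊕ Fin 1) ℝ :=
  innR u v • MblkR 0 w + innR v w • MblkR 0 u + innR w u • MblkR 0 v

/-- The Lorentz (top-left) block of a matrix in `gl(5,ℝ)`, through which an element of
`p(1,3)` acts on the vector representation `g₁ = ℝ⁴`. -/
def lorentzBlockR (m : Matrix (Fin 4 ⊕ Fin 1) (Fin 4 ⊕ Fin 1) ℝ) :
    Matrix (Fin 4) (Fin 4) ℝ :=
  Matrix.of fun i j => m (Sum.inl i) (Sum.inl j)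

/-!
The 3-bracket takes values in the abelian ideal of translations, on which `p(1,3)` acts
through its Lorentz block: `⁅M(A,b), τ(c)⁆ = τ(Ac)`. Equivariance J3 then reduces to the
η-skewness `⟨Au,v⟩_η = -⟨u,Av⟩_η` of the Lorentz block, and J4 holds because translations act
trivially on `g₁`.
-/

open Matrix

theorem dotProduct_mulVec_mulVec_eq_neg {n R : Type*} [Fintype n] [CommRing R]
    {η A : Matrix n n R} (hA : A.transpose * η + η * A = 0) (u v : n → R) :
    (A *ᵥ u) ⬝ᵥ (η *ᵥ v) = -(u ⬝ᵥ (η *ᵥ (A *ᵥ v))) := by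
  have h := congrArg (fun M => u ⬝ᵥ (M *ᵥ v)) hA
  simp only [add_mulVec, dotProduct_add, zero_mulVec, dotProduct_zero, ← mulVec_mulVec] at h
  rw [dotProduct_mulVec u Aᵀ, vecMul_transpose] at h
  exact eq_neg_of_add_eq_zero_left h

theorem innR_comm (u v : Fin 4 → ℝ) : innR u v = innR v u := by
  simp only [innR, etaR, mulVec_diagonal, dotProduct, Fin.sum_univ_four]
  ring

theorem innR_add_left (u u' v : Fin 4 → ℝ) : innR (u + u') v = innR u v + innR u' v :=
  add_dotProduct u u' _

theorem innR_smul_left (a : ℝ) (u v : Fin 4 → ℝ) : innR (a • u) v = a * innR u v :=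
  smul_dotProduct a u _

theorem innR_mulVec_left {A : Matrix (Fin 4) (Fin 4) ℝ}
    (hA : A.transpose * etaR + etaR * A = 0) (u v : Fin 4 → ℝ) :
    innR (A *ᵥ u) v = -innR u (A *ᵥ v) :=
  dotProduct_mulVec_mulVec_eq_neg hA u v

theorem MblkR_zero_add (b c : Fin 4 → ℝ) : MblkR 0 (b + c) = MblkR 0 b + MblkR 0 c := by
  ext (i | i) (j | j) <;> simp [MblkR]

theorem MblkR_zero_smul (a : ℝ) (b : Fin 4 → ℝ) : MblkR 0 (a • b) = a • MblkR 0 b := by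
  ext (i | i) (j | j) <;> simp [MblkR]

theorem lie_MblkR_MblkR_zero (A : Matrix (Fin 4) (Fin 4) ℝ) (b c : Fin 4 → ℝ) :
    ⁅MblkR A b, MblkR 0 c⁆ = MblkR 0 (A *ᵥ c) := by
  rw [Ring.lie_def]
  ext (i | i) (j | j) <;>
    simp [MblkR, fromBlocks_multiply, mul_apply, mulVec, dotProduct]

theorem lorentzBlockR_MblkR (A : Matrix (Fin 4) (Fin 4) ℝ) (b : Fin 4 → ℝ) :
    lorentzBlockR (MblkR A b) = A := by
  ext i j
  simp [lorentzBlockR, MblkR]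

def muVec (u v w : Fin 4 → ℝ) : Fin 4 → ℝ :=
  innR u v • w + innR v w • u + innR w u • v

theorem muP_eq_MblkR_muVec (u v w : Fin 4 → ℝ) : muP u v w = MblkR 0 (muVec u v w) := by
  simp only [muP, muVec, MblkR_zero_add, MblkR_zero_smul]

theorem muVec_comm_left (u v w : Fin 4 → ℝ) : muVec u v w = muVec v u w := by
  simp only [muVec, innR_comm v u, innR_comm u w, innR_comm w v]
  abel

theorem muVec_comm_right (u v w : Fin 4 → ℝ) : muVec u v w = muVec u w v := by
  simp only [muVec, innR_comm u w, innR_comm w v, innR_comm v u]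
  abel

theorem muVec_smul_add_left (a : ℝ) (u u' v w : Fin 4 → ℝ) :
    muVec (a • u + u') v w = a • muVec u v w + muVec u' v w := by
  simp only [muVec, innR_comm w (a • u + u'), innR_add_left, innR_smul_left, innR_comm u w,
    innR_comm u' w]
  module

theorem mulVec_muVec {A : Matrix (Fin 4) (Fin 4) ℝ} (hA : A.transpose * etaR + etaR * A = 0)
    (u v w : Fin 4 → ℝ) :
    A *ᵥ muVec u v w = muVec (A *ᵥ u) v w + muVec u (A *ᵥ v) w + muVec u v (A *ᵥ w) := by
  simp only [muVec, mulVec_add, mulVec_smul, innR_mulVec_left hA]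
  module

/-- `μ(u,v,w) = ⟨u,v⟩_η τ(w) + ⟨v,w⟩_η τ(u) + ⟨w,u⟩_η τ(v)` is a totally symmetric
trilinear map from `g₁ = ℝ⁴` (the vector representation, with `M(A,b)·v = Av`) to
`p(1,3)` (indeed into the translations), satisfying the equivariance identity J3 and the
identity J4; hence `p(1,3) ⊕ ℝ⁴` is an elementary Lie algebra of order 3. -/
theorem poincare_order3 :
    -- μ is totally symmetric …
    (∀ u v w : Fin 4 → ℝ, muP u v w = muP v u w) ∧
    (∀ u v w : Fin 4 → ℝ, muP u v w = muP u w v) ∧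
    -- … and trilinear
    (∀ (a : ℝ) (u u' v w : Fin 4 → ℝ),
      muP (a • u + u') v w = a • muP u v w + muP u' v w) ∧
    -- μ takes values among the translations, in particular in p(1,3)
    (∀ u v w : Fin 4 → ℝ, ∃ b : Fin 4 → ℝ, muP u v w = MblkR 0 b) ∧
    -- J3 : equivariance under the action of p(1,3)
    (∀ (A : Matrix (Fin 4) (Fin 4) ℝ) (b : Fin 4 → ℝ),
      A.transpose * etaR + etaR * A = 0 →
      ∀ u v w : Fin 4 → ℝ,
        ⁅MblkR A b, muP u v w⁆ =
          muP (A.mulVec u) v w + muP u (A.mulVec v) w + muP u v (A.mulVec w)) ∧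
    -- J4 : the sum of the actions of the values of μ on g₁ vanishes
    (∀ y₁ y₂ y₃ y₄ : Fin 4 → ℝ,
      (lorentzBlockR (muP y₂ y₃ y₄)).mulVec y₁ +
      (lorentzBlockR (muP y₁ y₃ y₄)).mulVec y₂ +
      (lorentzBlockR (muP y₁ y₂ y₄)).mulVec y₃ +
      (lorentzBlockR (muP y₁ y₂ y₃)).mulVec y₄ = 0) := by
  refine ⟨fun u v w => ?_, fun u v w => ?_, fun a u u' v w => ?_, fun u v w => ?_,
    fun A b hA u v w => ?_, fun y₁ y₂ y₃ y₄ => ?_⟩ <;> simp only [muP_eq_MblkR_muVec]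
  · rw [muVec_comm_left]
  · rw [muVec_comm_right]
  · rw [muVec_smul_add_left, MblkR_zero_add, MblkR_zero_smul]
  · exact ⟨_, rfl⟩
  · rw [lie_MblkR_MblkR_zero, mulVec_muVec hA, MblkR_zero_add, MblkR_zero_add]
  · simp only [lorentzBlockR_MblkR, zero_mulVec, add_zero]
end

section
/- Let sl(2,ℂ) be the Lie algebra of traceless 2×2 complex matrices and κ its Killing form. Let μ : sl(2,ℂ)³ → sl(2,ℂ) be any totally symmetric trilinear map that is equivariant for the adjoint action, i.e. ⁅x, μ(y₁,y₂,y₃)⁆ = μ(⁅x,y₁⁆,y₂,y₃) + μ(y₁,⁅x,y₂⁆,y₃) + μ(y₁,y₂,⁅x,y₃⁆) for all x,yᵢ ∈ sl(2,ℂ). Then there exists a scalar t ∈ ℂ such that μ(x,y,z) = t(κ(x,y)z + κ(y,z)x + κ(z,x)y) for all x,y,z; moreover every map of this form satisfies the identity J4: ⁅μ(y₂,y₃,y₄),y₁⁆ + ⁅μ(y₁,y₃,y₄),y₂⁆ + ⁅μ(y₁,y₂,y₄),y₃⁆ + ⁅μ(y₁,y₂,y₃),y₄⁆ = 0 for all y₁,…,y₄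 ∈ sl(2,ℂ). (This is case 1 of Theorem 3.1: the unique, up to scale, Lie algebra of order 3 structure on sl(2,ℂ) ⊕ ad sl(2,ℂ).) -/
abbrev sl2C : Type := ↥(LieAlgebra.SpecialLinear.sl (Fin 2) ℂ)

/-!
Write `Φ(x,y,z) = κ(x,y)z + κ(y,z)x + κ(z,x)y`. As `κ` is symmetric and invariant, `Φ` is
symmetric, trilinear and equivariant, hence so is `ν = μ - tΦ` for every `t`. Equivariance under
`h = diag(1,-1)` puts `μ(h,h,h)` in the centraliser `ℂh` of `h`, so `t` can be chosen with
`ν(h,h,h) = 0`. As `sl(2,ℂ) = ℂh + [sl(2,ℂ), h]`, equivariance propagates this vanishing to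
`ν(·,h,h)`, then to `ν(·,·,h)` and finally to `ν` (dividing by `3` and `2` on the way).
J4 for `Φ` only uses the symmetry of `κ` and the skew-symmetry of the bracket.
-/

section CommRing

variable {R L : Type*} [CommRing R] [LieRing L] [LieAlgebra R L]

variable (R) in
structure IsEquivariantSymmTrilinear (μ : L → L → L → L) : Prop where
  add_left : ∀ x x' y z : L, μ (x + x') y z = μ x y z + μ x' y z
  smul_left : ∀ (a : R) (x y z : L), μ (a • x) y z = a • μ x y z
  comm₁₂ : ∀ x y z : L, μ x y z = μ y x z
  comm₂₃ : ∀ x y z : L, μ x y z = μ x z y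
  lie_apply : ∀ x y₁ y₂ y₃ : L,
    ⁅x, μ y₁ y₂ y₃⁆ = μ ⁅x, y₁⁆ y₂ y₃ + μ y₁ ⁅x, y₂⁆ y₃ + μ y₁ y₂ ⁅x, y₃⁆

def cyclicTrilinear (B : LinearMap.BilinForm R L) (x y z : L) : L :=
  B x y • z + B y z • x + B z x • y

theorem isEquivariantSymmTrilinear_cyclicTrilinear {B : LinearMap.BilinForm R L}
    (hB : B.IsSymm) (hinv : B.lieInvariant L) :
    IsEquivariantSymmTrilinear R (cyclicTrilinear B) where
  add_left x x' y z := by simp only [cyclicTrilinear, map_add, LinearMap.add_apply]; module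
  smul_left a x y z := by simp only [cyclicTrilinear, map_smul, LinearMap.smul_apply]; module
  comm₁₂ x y z := by simp only [cyclicTrilinear, hB.eq y x, hB.eq z y, hB.eq x z]; abel
  comm₂₃ x y z := by simp only [cyclicTrilinear, hB.eq y x, hB.eq z y, hB.eq x z]; abel
  lie_apply x a b c := by
    simp only [cyclicTrilinear, lie_add, lie_smul, hinv x]
    module

theorem sum_lie_cyclicTrilinear_eq_zero {B : LinearMap.BilinForm R L} (hB : B.IsSymm)
    (y₁ y₂ y₃ y₄ : L) :
    ⁅cyclicTrilinear B y₂ y₃ y₄, y₁⁆ + ⁅cyclicTrilinear B y₁ y₃ y₄, y₂⁆ +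
      ⁅cyclicTrilinear B y₁ y₂ y₄, y₃⁆ + ⁅cyclicTrilinear B y₁ y₂ y₃, y₄⁆ = 0 := by
  simp only [cyclicTrilinear, add_lie, smul_lie, hB.eq y₄ y₂, hB.eq y₄ y₁, hB.eq y₃ y₁,
    ← lie_skew y₁ y₂, ← lie_skew y₁ y₃, ← lie_skew y₁ y₄, ← lie_skew y₂ y₃, ← lie_skew y₂ y₄,
    ← lie_skew y₃ y₄]
  module

namespace IsEquivariantSymmTrilinear

variable {μ ν : L → L → L → L}

theorem sub (hμ : IsEquivariantSymmTrilinear R μ) (hν : IsEquivariantSymmTrilinear R ν) :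
    IsEquivariantSymmTrilinear R (fun x y z => μ x y z - ν x y z) where
  add_left x x' y z := by rw [hμ.add_left, hν.add_left]; abel
  smul_left a x y z := by rw [hμ.smul_left, hν.smul_left, smul_sub]
  comm₁₂ x y z := by rw [hμ.comm₁₂, hν.comm₁₂]
  comm₂₃ x y z := by rw [hμ.comm₂₃, hν.comm₂₃]
  lie_apply x a b c := by rw [lie_sub, hμ.lie_apply, hν.lie_apply]; abel

theorem smul (hμ : IsEquivariantSymmTrilinear R μ) (t : R) :
    IsEquivariantSymmTrilinear R (fun x y z => t • μ x y z) where
  add_left x x' y z := by rw [hμ.add_left, smul_add]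
  smul_left a x y z := by rw [hμ.smul_left, smul_comm]
  comm₁₂ x y z := by rw [hμ.comm₁₂]
  comm₂₃ x y z := by rw [hμ.comm₂₃]
  lie_apply x a b c := by rw [lie_smul, hμ.lie_apply]; simp only [smul_add]

variable (hμ : IsEquivariantSymmTrilinear R μ)
include hμ

theorem zero_left (y z : L) : μ 0 y z = 0 := by
  simpa using hμ.smul_left 0 0 y z

theorem lie_self_apply_self_self_self (a : L) : ⁅a, μ a a a⁆ = 0 := by
  rw [hμ.lie_apply, lie_self, hμ.zero_left, hμ.comm₁₂ a 0, hμ.zero_left, hμ.comm₂₃,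
    hμ.comm₁₂ a 0, hμ.zero_left, add_zero, add_zero]

theorem apply_eq_zero_of_span {a : L}
    (hspan : ∀ w : L, ∃ (c : R) (x : L), w = c • a + ⁅x, a⁆) {y z : L}
    (ha : μ a y z = 0) (hlie : ∀ x : L, μ ⁅x, a⁆ y z = 0) (w : L) : μ w y z = 0 := by
  obtain ⟨c, x, rfl⟩ := hspan w
  rw [hμ.add_left, hμ.smul_left, ha, hlie, smul_zero, add_zero]

theorem apply_lie_left_eq_zero {a : L} (ha : ∀ y z, μ a y z = 0) (x y z : L) :
    μ ⁅x, a⁆ y z = 0 := by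
  have h := hμ.lie_apply x a y z
  rwa [ha, ha, ha, lie_zero, add_zero, add_zero, eq_comm] at h

end IsEquivariantSymmTrilinear

end CommRing

section CharZero

variable {K L : Type*} [Field K] [CharZero K] [LieRing L] [LieAlgebra K L] {μ : L → L → L → L}

namespace IsEquivariantSymmTrilinear

variable (hμ : IsEquivariantSymmTrilinear K μ)
include hμ

theorem apply_lie_left_self_eq_zero {a : L} (ha : ∀ z, μ a a z = 0) (x z : L) :
    μ ⁅x, a⁆ a z = 0 := by
  have h := hμ.lie_apply x a a z
  rw [ha, ha, lie_zero, add_zero, hμ.comm₁₂ a] at h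
  have h2 : (2 : K) • μ ⁅x, a⁆ a z = 0 := by linear_combination (norm := module) -h
  exact (smul_eq_zero.mp h2).resolve_left two_ne_zero

theorem apply_lie_left_self_self_eq_zero {a : L} (ha : μ a a a = 0) (x : L) :
    μ ⁅x, a⁆ a a = 0 := by
  have h := hμ.lie_apply x a a a
  rw [ha, lie_zero, hμ.comm₁₂ a ⁅x, a⁆, hμ.comm₂₃ a a, hμ.comm₁₂ a ⁅x, a⁆] at h
  have h3 : (3 : K) • μ ⁅x, a⁆ a a = 0 := by linear_combination (norm := module) -h
  exact (smul_eq_zero.mp h3).resolve_left three_ne_zero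

theorem eq_zero_of_apply_self_self_self {a : L}
    (hspan : ∀ w : L, ∃ (c : K) (x : L), w = c • a + ⁅x, a⁆) (ha : μ a a a = 0) (x y z : L) :
    μ x y z = 0 := by
  have haa (z : L) : μ a a z = 0 := by
    rw [hμ.comm₂₃, hμ.comm₁₂]
    exact hμ.apply_eq_zero_of_span hspan ha (hμ.apply_lie_left_self_self_eq_zero ha) z
  have ha' (y z : L) : μ a y z = 0 := by
    rw [hμ.comm₁₂]
    exact hμ.apply_eq_zero_of_span hspan (haa z) (hμ.apply_lie_left_self_eq_zero haa · z) y
  exact hμ.apply_eq_zero_of_span hspan (ha' y z) (hμ.apply_lie_left_eq_zero ha' · y z) x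

end IsEquivariantSymmTrilinear

end CharZero

namespace sl2C

open LieAlgebra.SpecialLinear Matrix

lemma mem_sl_of_add_eq_zero {A : Matrix (Fin 2) (Fin 2) ℂ} (hA : A 0 0 + A 1 1 = 0) :
    A ∈ sl (Fin 2) ℂ :=
  show trace A = 0 by rwa [trace_fin_two]

def h : sl2C := ⟨!![1, 0; 0, -1], mem_sl_of_add_eq_zero (by simp)⟩

lemma val_eq_matrix (v : sl2C) : v.val = !![v.val 0 0, v.val 0 1; v.val 1 0, -v.val 0 0] := by
  have : v.val 0 0 + v.val 1 1 = 0 := by rw [← trace_fin_two]; exact v.2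
  ext i j; fin_cases i <;> fin_cases j <;> simp; linear_combination this

lemma val_lie_h (v : sl2C) : (⁅h, v⁆ : sl2C).val = !![0, 2 * v.val 0 1; -2 * v.val 1 0, 0] := by
  rw [sl_bracket, val_eq_matrix v]
  ext i j; fin_cases i <;> fin_cases j <;> simp [h] <;> ring

lemma exists_eq_smul_h_of_lie_h_eq_zero {v : sl2C} (hv : ⁅h, v⁆ = 0) : ∃ c : ℂ, v = c • h := by
  have h01 := congrArg (fun w : sl2C => w.val 0 1) hv
  have h10 := congrArg (fun w : sl2C => w.val 1 0) hv
  simp only [val_lie_h] at h01 h10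
  refine ⟨v.val 0 0, Subtype.ext ?_⟩
  rw [val_eq_matrix v]
  ext i j; fin_cases i <;> fin_cases j <;> simp_all [h]

lemma exists_eq_smul_h_add_lie_h (w : sl2C) : ∃ (c : ℂ) (x : sl2C), w = c • h + ⁅x, h⁆ := by
  refine ⟨w.val 0 0,
    ⟨!![0, -w.val 0 1 / 2; w.val 1 0 / 2, 0], mem_sl_of_add_eq_zero (by simp)⟩, ?_⟩
  rw [← lie_skew]
  apply Subtype.ext
  change w.val = w.val 0 0 • h.val + -(⁅h, _⁆ : sl2C).val
  rw [val_lie_h, val_eq_matrix w]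
  ext i j; fin_cases i <;> fin_cases j <;> simp [h] <;> ring

def coords : sl2C ≃ₗ[ℂ] (Fin 3 → ℂ) where
  toFun v := ![v.val 0 0, v.val 0 1, v.val 1 0]
  map_add' u v := by ext i; fin_cases i <;> rfl
  map_smul' a v := by ext i; fin_cases i <;> rfl
  invFun c := ⟨!![c 0, c 1; c 2, -c 0], mem_sl_of_add_eq_zero (by simp)⟩
  left_inv v := by apply Subtype.ext; rw [val_eq_matrix v]; simp
  right_inv c := by ext i; fin_cases i <;> rfl

lemma killingForm_h_h : killingForm ℂ sl2C h h = 8 := by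
  rw [killingForm_apply_apply, LinearMap.trace_eq_matrix_trace ℂ (Module.Basis.ofEquivFun coords),
    trace_fin_three]
  simp [LinearMap.toMatrix_apply, Module.Basis.ofEquivFun_repr_apply, Module.Basis.coe_ofEquivFun,
    coords, h, Ring.lie_def]
  norm_num

end sl2C

/-- Any totally symmetric trilinear map `μ : sl(2,ℂ)³ → sl(2,ℂ)` which is equivariant for
the adjoint action (identity J3) is of the form
`μ(x,y,z) = t(κ(x,y)z + κ(y,z)x + κ(z,x)y)` with `κ` the Killing form, for some `t ∈ ℂ`;
moreover every map of this form satisfies the identity J4.  (Case 1 of Theorem 3.1: the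
unique, up to scale, Lie algebra of order 3 structure on `sl(2,ℂ) ⊕ ad sl(2,ℂ)`.) -/
theorem sl2_adjoint_order3_classification
    (μ : sl2C → sl2C → sl2C → sl2C)
    (hadd : ∀ x x' y z, μ (x + x') y z = μ x y z + μ x' y z)
    (hsmul : ∀ (a : ℂ) (x y z), μ (a • x) y z = a • μ x y z)
    (hsymm₁ : ∀ x y z, μ x y z = μ y x z)
    (hsymm₂ : ∀ x y z, μ x y z = μ x z y)
    (hJ3 : ∀ (x y₁ y₂ y₃ : sl2C), ⁅x, μ y₁ y₂ y₃⁆ =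
      μ ⁅x, y₁⁆ y₂ y₃ + μ y₁ ⁅x, y₂⁆ y₃ + μ y₁ y₂ ⁅x, y₃⁆) :
    (∃ t : ℂ, ∀ x y z : sl2C,
      μ x y z = t • (killingForm ℂ sl2C x y • z + killingForm ℂ sl2C y z • x +
        killingForm ℂ sl2C z x • y)) ∧
    (∀ t : ℂ, ∀ y₁ y₂ y₃ y₄ : sl2C,
      ⁅t • (killingForm ℂ sl2C y₂ y₃ • y₄ + killingForm ℂ sl2C y₃ y₄ • y₂ +
        killingForm ℂ sl2C y₄ y₂ • y₃), y₁⁆ +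
      ⁅t • (killingForm ℂ sl2C y₁ y₃ • y₄ + killingForm ℂ sl2C y₃ y₄ • y₁ +
        killingForm ℂ sl2C y₄ y₁ • y₃), y₂⁆ +
      ⁅t • (killingForm ℂ sl2C y₁ y₂ • y₄ + killingForm ℂ sl2C y₂ y₄ • y₁ +
        killingForm ℂ sl2C y₄ y₁ • y₂), y₃⁆ +
      ⁅t • (killingForm ℂ sl2C y₁ y₂ • y₃ + killingForm ℂ sl2C y₂ y₃ • y₁ +
        killingForm ℂ sl2C y₃ y₁ • y₂), y₄⁆ = 0) := by
  have hsymm : (killingForm ℂ sl2C).IsSymm := ⟨LieModule.traceForm_comm ℂ sl2C sl2C⟩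
  have hμ : IsEquivariantSymmTrilinear ℂ μ := ⟨hadd, hsmul, hsymm₁, hsymm₂, hJ3⟩
  have hΦ := isEquivariantSymmTrilinear_cyclicTrilinear hsymm
    (LieModule.traceForm_lieInvariant ℂ sl2C sl2C)
  refine ⟨?_, fun t y₁ y₂ y₃ y₄ => ?_⟩
  · obtain ⟨c, hc⟩ :=
      sl2C.exists_eq_smul_h_of_lie_h_eq_zero (hμ.lie_self_apply_self_self_self sl2C.h)
    -- `cyclicTrilinear κ h h h = 3 κ(h,h) • h = 24 • h`
    refine ⟨c / 24, fun x y z => sub_eq_zero.mp ?_⟩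
    refine (hμ.sub (hΦ.smul (c / 24))).eq_zero_of_apply_self_self_self
      sl2C.exists_eq_smul_h_add_lie_h ?_ x y z
    simp only [cyclicTrilinear, hc, sl2C.killingForm_h_h]
    module
  · simp only [smul_lie, ← smul_add]
    exact (congrArg (t • ·) (sum_lie_cyclicTrilinear_eq_zero hsymm y₁ y₂ y₃ y₄)).trans
      (smul_zero t)
end

section
/- Let g₁ = ℂ² ⊕ ℂ, where ℂ² is the standard 2-dimensional module over sl(2,ℂ) (matrix action, the representation D₁) and ℂ is the trivial module D₀; write elements as pairs (u,a). Let J = [[0,1],[−1,0]] and for u,v ∈ ℂ² set S(u,v) = u(Jv)ᵀ + v(Ju)ᵀ ∈ sl(2,ℂ). Then: (1) every totally symmetric trilinear map μ : g₁³ → sl(2,ℂ) that is equivariant (identity J3) is of the form μ((u,a),(v,b),(w,c)) = t(a·S(v,w) + b·S(w,u) + c·S(u,v)) for some scalar t ∈ ℂ; and (2) every map of this form also satisfies the identity J4, so sl(2,ℂ) ⊕ (ℂ² ⊕ ℂ) carries an elementary Lie algebra of order 3 structure, unique up to a scalar. (This is case 3 of Theorem 3.1, with brackets {λ,Y₁,Y₁}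 = −2X₊, {λ,Y₁,Y₋₁} = X₀, {λ,Y₋₁,Y₋₁} = 2X₋ up to normalization.) -/
noncomputable section

/-- `J = [[0,1],[−1,0]]`. -/
def Jmat : Matrix (Fin 2) (Fin 2) ℂ := !![0, 1; -1, 0]

/-- `S(u,v) = u (Jv)ᵀ + v (Ju)ᵀ`, a traceless `2×2` matrix. -/
def Smat (u v : Fin 2 → ℂ) : Matrix (Fin 2) (Fin 2) ℂ :=
  Matrix.of fun i j => u i * Jmat.mulVec v j + v i * Jmat.mulVec u j

/-- The action of `sl(2,ℂ)` on `g₁ = ℂ² ⊕ ℂ` (standard module `D₁` plus trivial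
module `D₀`): `x·(u,a) = (xu, 0)`. -/
def actD1D0 (x : sl2C) (p : (Fin 2 → ℂ) × ℂ) : (Fin 2 → ℂ) × ℂ :=
  ((x : Matrix (Fin 2) (Fin 2) ℂ).mulVec p.1, 0)

namespace Sl2Aux

lemma memsl (A : Matrix (Fin 2) (Fin 2) ℂ) (h : A 0 0 + A 1 1 = 0) :
    A ∈ LieAlgebra.SpecialLinear.sl (Fin 2) ℂ := by
  show A ∈ LinearMap.ker (Matrix.traceLinearMap (Fin 2) ℂ ℂ)
  rw [LinearMap.mem_ker]
  simpa [Matrix.trace_fin_two] using h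

lemma trsl (x : sl2C) :
    (x : Matrix (Fin 2) (Fin 2) ℂ) 0 0 + (x : Matrix (Fin 2) (Fin 2) ℂ) 1 1 = 0 := by
  have h2 : Matrix.trace (x : Matrix (Fin 2) (Fin 2) ℂ) = 0 := x.2
  simpa [Matrix.trace_fin_two] using h2

lemma entr {A B : Matrix (Fin 2) (Fin 2) ℂ} (h : A = B) (i j : Fin 2) :
    A i j = B i j := by rw [h]

def e0v : Fin 2 → ℂ := ![1, 0]
def e1v : Fin 2 → ℂ := ![0, 1]
def v0 : (Fin 2 → ℂ) × ℂ := (e0v, 0)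
def v1 : (Fin 2 → ℂ) × ℂ := (e1v, 0)
def vf : (Fin 2 → ℂ) × ℂ := (0, 1)

def Hm : Matrix (Fin 2) (Fin 2) ℂ := !![1, 0; 0, -1]
def Em : Matrix (Fin 2) (Fin 2) ℂ := !![0, 1; 0, 0]
def Fm : Matrix (Fin 2) (Fin 2) ℂ := !![0, 0; 1, 0]

def Hsl : sl2C := ⟨Hm, memsl _ (by norm_num [Hm])⟩
def Esl : sl2C := ⟨Em, memsl _ (by norm_num [Em])⟩
def Fsl : sl2C := ⟨Fm, memsl _ (by norm_num [Fm])⟩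

lemma aH0 : actD1D0 Hsl v0 = v0 := by
  unfold actD1D0 Hsl v0
  refine Prod.ext ?_ rfl
  funext i
  fin_cases i <;> simp [Hm, e0v, Matrix.mulVec, dotProduct, Fin.sum_univ_two]

lemma aH1 : actD1D0 Hsl v1 = -v1 := by
  unfold actD1D0 Hsl v1
  refine Prod.ext ?_ (by simp)
  funext i
  fin_cases i <;> simp [Hm, e1v, Matrix.mulVec, dotProduct, Fin.sum_univ_two]

lemma aE0 : actD1D0 Esl v0 = 0 := by
  unfold actD1D0 Esl v0
  refine Prod.ext ?_ rfl
  funext i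
  fin_cases i <;> simp [Em, e0v, Matrix.mulVec, dotProduct, Fin.sum_univ_two]

lemma aE1 : actD1D0 Esl v1 = v0 := by
  unfold actD1D0 Esl v1 v0
  refine Prod.ext ?_ rfl
  funext i
  fin_cases i <;> simp [Em, e0v, e1v, Matrix.mulVec, dotProduct, Fin.sum_univ_two]

lemma aF0 : actD1D0 Fsl v0 = v1 := by
  unfold actD1D0 Fsl v0 v1
  refine Prod.ext ?_ rfl
  funext i
  fin_cases i <;> simp [Fm, e0v, e1v, Matrix.mulVec, dotProduct, Fin.sum_univ_two]

lemma aF1 : actD1D0 Fsl v1 = 0 := by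
  unfold actD1D0 Fsl v1
  refine Prod.ext ?_ rfl
  funext i
  fin_cases i <;> simp [Fm, e1v, Matrix.mulVec, dotProduct, Fin.sum_univ_two]

lemma aXf (x : sl2C) : actD1D0 x vf = 0 := by
  unfold actD1D0 vf
  exact Prod.ext (by simp [Matrix.mulVec_zero]) rfl

lemma Smat_comm (u v : Fin 2 → ℂ) : Smat u v = Smat v u := by
  ext i j; simp [Smat]; ring

lemma Smat_addl (u u' v : Fin 2 → ℂ) : Smat (u + u') v = Smat u v + Smat u' v := by
  ext i j; simp [Smat, Matrix.mulVec_add]; ring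

lemma Smat_smull (a : ℂ) (u v : Fin 2 → ℂ) : Smat (a • u) v = a • Smat u v := by
  ext i j; simp [Smat, Matrix.mulVec_smul]; ring

lemma Smat_zerol (v : Fin 2 → ℂ) : Smat 0 v = 0 := by
  ext i j; simp [Smat, Matrix.mulVec_zero]

lemma S00 : Smat e0v e0v = !![0, -2; 0, 0] := by
  ext i j
  fin_cases i <;> fin_cases j <;>
    simp [Smat, Jmat, e0v, Matrix.mulVec, dotProduct, Fin.sum_univ_two] <;> ring

lemma S01 : Smat e0v e1v = !![1, 0; 0, -1] := by
  ext i j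
  fin_cases i <;> fin_cases j <;>
    simp [Smat, Jmat, e0v, e1v, Matrix.mulVec, dotProduct, Fin.sum_univ_two] <;> ring

lemma S11 : Smat e1v e1v = !![0, 0; 2, 0] := by
  ext i j
  fin_cases i <;> fin_cases j <;>
    simp [Smat, Jmat, e1v, Matrix.mulVec, dotProduct, Fin.sum_univ_two] <;> ring

lemma pdecomp (p : (Fin 2 → ℂ) × ℂ) : p = p.1 0 • v0 + p.1 1 • v1 + p.2 • vf := by
  refine Prod.ext ?_ ?_
  · funext i
    fin_cases i <;> simp [v0, v1, vf, e0v, e1v]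
  · simp [v0, v1, vf]


lemma comm_H (M : Matrix (Fin 2) (Fin 2) ℂ) :
    Hm * M - M * Hm = !![0, 2 * M 0 1; -2 * M 1 0, 0] := by
  ext i j
  fin_cases i <;> fin_cases j <;>
    simp [Hm, Matrix.mul_apply, Fin.sum_univ_two, Matrix.vecMul, dotProduct] <;> ring

lemma comm_E (M : Matrix (Fin 2) (Fin 2) ℂ) :
    Em * M - M * Em = !![M 1 0, M 1 1 - M 0 0; 0, -(M 1 0)] := by
  ext i j
  fin_cases i <;> fin_cases j <;>
    simp [Em, Matrix.mul_apply, Fin.sum_univ_two, Matrix.vecMul, dotProduct] <;> ring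

lemma comm_F (M : Matrix (Fin 2) (Fin 2) ℂ) :
    Fm * M - M * Fm = !![-(M 0 1), 0; M 0 0 - M 1 1, M 0 1] := by
  ext i j
  fin_cases i <;> fin_cases j <;>
    simp [Fm, Matrix.mul_apply, Fin.sum_univ_two, Matrix.vecMul, dotProduct] <;> ring

lemma wzero (M : Matrix (Fin 2) (Fin 2) ℂ) (w : ℂ) (hw0 : w ≠ 0) (hw2 : w ≠ 2) (hw2' : w ≠ -2)
    (h : Hm * M - M * Hm = w • M) : M = 0 := by
  rw [comm_H] at h
  have e00 := entr h 0 0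
  have e01 := entr h 0 1
  have e10 := entr h 1 0
  have e11 := entr h 1 1
  simp [Matrix.smul_apply] at e00 e01 e10 e11
  ext i j
  fin_cases i <;> fin_cases j
  · simpa using e00.resolve_left hw0
  · simpa using e01.resolve_left (fun hh => hw2 hh.symm)
  · simp only [Matrix.zero_apply]
    rcases mul_eq_zero.mp (show (w + 2) * M 1 0 = 0 by linear_combination -e10) with h' | h'
    · exact absurd (by linear_combination h') hw2'
    · exact h'
  · simpa using e11.resolve_left hw0

def Tmap (t : ℂ) (p q r : (Fin 2 → ℂ) × ℂ) : Matrix (Fin 2) (Fin 2) ℂ :=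
  t • (p.2 • Smat q.1 r.1 + q.2 • Smat r.1 p.1 + r.2 • Smat p.1 q.1)

lemma Tentry (t : ℂ) (p q r : (Fin 2 → ℂ) × ℂ) (i j : Fin 2) :
    Tmap t p q r i j = t * (p.2 * (q.1 i * Jmat.mulVec r.1 j + r.1 i * Jmat.mulVec q.1 j)
      + q.2 * (r.1 i * Jmat.mulVec p.1 j + p.1 i * Jmat.mulVec r.1 j)
      + r.2 * (p.1 i * Jmat.mulVec q.1 j + q.1 i * Jmat.mulVec p.1 j)) := by
  simp [Tmap, Smat, Matrix.smul_apply, Matrix.add_apply]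
  try ring

lemma Tadd (t : ℂ) (p p' q r : (Fin 2 → ℂ) × ℂ) :
    Tmap t (p + p') q r = Tmap t p q r + Tmap t p' q r := by
  ext i j
  simp only [Matrix.add_apply, Tentry, Prod.fst_add, Prod.snd_add, Pi.add_apply,
    Matrix.mulVec_add]
  ring

lemma Tsmul (t a : ℂ) (p q r : (Fin 2 → ℂ) × ℂ) :
    Tmap t (a • p) q r = a • Tmap t p q r := by
  ext i j
  simp only [Matrix.smul_apply, Tentry, Prod.smul_fst, Prod.smul_snd, Pi.smul_apply,
    Matrix.mulVec_smul, smul_eq_mul]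
  ring

lemma Ts1 (t : ℂ) (p q r : (Fin 2 → ℂ) × ℂ) : Tmap t p q r = Tmap t q p r := by
  ext i j; simp only [Tentry]; ring

lemma Ts2 (t : ℂ) (p q r : (Fin 2 → ℂ) × ℂ) : Tmap t p q r = Tmap t p r q := by
  ext i j; simp only [Tentry]; ring

lemma ext3 (G : (Fin 2 → ℂ) × ℂ → (Fin 2 → ℂ) × ℂ → (Fin 2 → ℂ) × ℂ → Matrix (Fin 2) (Fin 2) ℂ)
    (Gadd : ∀ p p' q r, G (p + p') q r = G p q r + G p' q r)
    (Gsmul : ∀ (a : ℂ) p q r, G (a • p) q r = a • G p q r)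
    (Gs1 : ∀ p q r, G p q r = G q p r)
    (Gs2 : ∀ p q r, G p q r = G p r q)
    (b1 : G v0 v0 v0 = 0) (b2 : G v0 v0 v1 = 0) (b3 : G v0 v1 v1 = 0) (b4 : G v1 v1 v1 = 0)
    (b5 : G v0 v0 vf = 0) (b6 : G v0 v1 vf = 0) (b7 : G v1 v1 vf = 0)
    (b8 : G v0 vf vf = 0) (b9 : G v1 vf vf = 0) (b10 : G vf vf vf = 0) :
    ∀ p q r, G p q r = 0 := by
  have Gp : ∀ p q r, G p q r = G r p q := fun p q r => (Gs2 p q r).trans (Gs1 p r q)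
  have pdec : ∀ p : (Fin 2 → ℂ) × ℂ, p = p.1 0 • v0 + p.1 1 • v1 + p.2 • vf := by
    intro p
    refine Prod.ext ?_ ?_
    · funext i
      fin_cases i <;> simp [v0, v1, vf, e0v, e1v]
    · simp [v0, v1, vf]
  have Gexp1 : ∀ p q r, G p q r = p.1 0 • G v0 q r + p.1 1 • G v1 q r + p.2 • G vf q r := by
    intro p q r
    conv_lhs => rw [pdec p]
    rw [Gadd, Gadd, Gsmul, Gsmul, Gsmul]
  have Gexp2 : ∀ p q r, G p q r = q.1 0 • G p v0 r + q.1 1 • G p v1 r + q.2 • G p vf r := by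
    intro p q r
    rw [Gs1, Gexp1, Gs1 v0 p r, Gs1 v1 p r, Gs1 vf p r]
  have Gexp3 : ∀ p q r, G p q r = r.1 0 • G p q v0 + r.1 1 • G p q v1 + r.2 • G p q vf := by
    intro p q r
    rw [Gp, Gexp1, ← Gp p q v0, ← Gp p q v1, ← Gp p q vf]
  have L1 : ∀ r, G v0 v0 r = 0 := by
    intro r; rw [Gexp3, b1, b2, b5]; try simp
  have L2 : ∀ r, G v0 v1 r = 0 := by
    intro r; rw [Gexp3, show G v0 v1 v0 = 0 from (Gs2 v0 v1 v0).trans b2, b3, b6]; try simp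
  have L3 : ∀ r, G v0 vf r = 0 := by
    intro r
    rw [Gexp3, show G v0 vf v0 = 0 from (Gs2 v0 vf v0).trans b5,
      show G v0 vf v1 = 0 from (Gs2 v0 vf v1).trans b6, b8]; try simp
  have L4 : ∀ r, G v1 v1 r = 0 := by
    intro r; rw [Gexp3, show G v1 v1 v0 = 0 from (Gp v1 v1 v0).trans b3, b4, b7]; try simp
  have L5 : ∀ r, G v1 vf r = 0 := by
    intro r
    rw [Gexp3, show G v1 vf v0 = 0 from (Gp v1 vf v0).trans b6,
      show G v1 vf v1 = 0 from (Gp v1 vf v1).trans b7, b9]; try simp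
  have L6 : ∀ r, G vf vf r = 0 := by
    intro r
    rw [Gexp3, show G vf vf v0 = 0 from (Gp vf vf v0).trans b8,
      show G vf vf v1 = 0 from (Gp vf vf v1).trans b9, b10]; try simp
  have M1 : ∀ q r, G v0 q r = 0 := by
    intro q r; rw [Gexp2, L1, L2, L3]; try simp
  have M2 : ∀ q r, G v1 q r = 0 := by
    intro q r
    rw [Gexp2, show G v1 v0 r = 0 from (Gs1 v1 v0 r).trans (L2 r), L4, L5]; try simp
  have M3 : ∀ q r, G vf q r = 0 := by
    intro q r
    rw [Gexp2, show G vf v0 r = 0 from (Gs1 vf v0 r).trans (L3 r),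
      show G vf v1 r = 0 from (Gs1 vf v1 r).trans (L5 r), L6]; try simp
  intro p q r
  rw [Gexp1, M1, M2, M3]; try simp

end Sl2Aux

set_option maxHeartbeats 1000000 in
open Sl2Aux in
/-- Case 3 of Theorem 3.1: on `g₁ = ℂ² ⊕ ℂ = D₁ ⊕ D₀`, (1) every totally symmetric
trilinear `sl(2,ℂ)`-equivariant (J3) map `μ : g₁³ → sl(2,ℂ)` is of the form
`μ((u,a),(v,b),(w,c)) = t(a S(v,w) + b S(w,u) + c S(u,v))` for some `t ∈ ℂ`, and
(2) every map of this form also satisfies the identity J4; hence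
`sl(2,ℂ) ⊕ (ℂ² ⊕ ℂ)` carries an elementary Lie algebra of order 3 structure, unique up
to a scalar. -/
theorem sl2_D1_D0_order3_classification
    (μ : (Fin 2 → ℂ) × ℂ → (Fin 2 → ℂ) × ℂ → (Fin 2 → ℂ) × ℂ → sl2C)
    (hadd : ∀ p p' q r, μ (p + p') q r = μ p q r + μ p' q r)
    (hsmul : ∀ (a : ℂ) (p q r), μ (a • p) q r = a • μ p q r)
    (hsymm₁ : ∀ p q r, μ p q r = μ q p r)
    (hsymm₂ : ∀ p q r, μ p q r = μ p r q)
    (hJ3 : ∀ (x : sl2C) (p q r : (Fin 2 → ℂ) × ℂ), ⁅x, μ p q r⁆ =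
      μ (actD1D0 x p) q r + μ p (actD1D0 x q) r + μ p q (actD1D0 x r)) :
    -- (1) μ is a scalar multiple of the canonical bracket
    (∃ t : ℂ, ∀ p q r : (Fin 2 → ℂ) × ℂ,
      (μ p q r : Matrix (Fin 2) (Fin 2) ℂ) =
        t • (p.2 • Smat q.1 r.1 + q.2 • Smat r.1 p.1 + r.2 • Smat p.1 q.1)) ∧
    -- (2) every map of this form satisfies J4
    (∀ t : ℂ, ∀ y₁ y₂ y₃ y₄ : (Fin 2 → ℂ) × ℂ,
      (t • (y₂.2 • Smat y₃.1 y₄.1 + y₃.2 • Smat y₄.1 y₂.1 + y₄.2 • Smat y₂.1 y₃.1)).mulVec y₁.1 +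
      (t • (y₁.2 • Smat y₃.1 y₄.1 + y₃.2 • Smat y₄.1 y₁.1 + y₄.2 • Smat y₁.1 y₃.1)).mulVec y₂.1 +
      (t • (y₁.2 • Smat y₂.1 y₄.1 + y₂.2 • Smat y₄.1 y₁.1 + y₄.2 • Smat y₁.1 y₂.1)).mulVec y₃.1 +
      (t • (y₁.2 • Smat y₂.1 y₃.1 + y₂.2 • Smat y₃.1 y₁.1 + y₃.2 • Smat y₁.1 y₂.1)).mulVec y₄.1
        = 0) := by
  constructor
  · -- part (1)
    have hperm : ∀ p q r, μ p q r = μ r p q := fun p q r =>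
      (hsymm₂ p q r).trans (hsymm₁ p r q)
    have hzero₁ : ∀ q r, μ 0 q r = 0 := fun q r => by
      have h := hsmul 0 0 q r; simpa using h
    have hzero₂ : ∀ p r, μ p 0 r = 0 := fun p r => by
      rw [hsymm₁]; exact hzero₁ _ _
    have hzero₃ : ∀ p q, μ p q 0 = 0 := fun p q => by
      rw [hperm]; exact hzero₁ _ _
    have hneg₁ : ∀ p q r, μ (-p) q r = -μ p q r := fun p q r => by
      rw [show (-p) = (-1 : ℂ) • p by simp, hsmul]; simp
    have hneg₂ : ∀ p q r, μ p (-q) r = -μ p q r := fun p q r => by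
      rw [hsymm₁, hneg₁, hsymm₁]
    have hneg₃ : ∀ p q r, μ p q (-r) = -μ p q r := fun p q r => by
      rw [hsymm₂, hneg₂, hsymm₂]
    have mkey : ∀ (x : sl2C) (p q r : (Fin 2 → ℂ) × ℂ),
        (x : Matrix (Fin 2) (Fin 2) ℂ) * (μ p q r : Matrix (Fin 2) (Fin 2) ℂ)
          - (μ p q r : Matrix (Fin 2) (Fin 2) ℂ) * (x : Matrix (Fin 2) (Fin 2) ℂ)
        = ((μ (actD1D0 x p) q r + μ p (actD1D0 x q) r + μ p q (actD1D0 x r) : sl2C) :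
            Matrix (Fin 2) (Fin 2) ℂ) := by
      intro x p q r
      have h := congrArg Subtype.val (hJ3 x p q r)
      rw [LieAlgebra.SpecialLinear.sl_bracket] at h
      exact h
    -- vanishing of the pure-weight components
    have z1 : (μ v0 v0 v0 : Matrix (Fin 2) (Fin 2) ℂ) = 0 := by
      apply wzero _ 3 (by norm_num) (by norm_num) (by norm_num)
      have h := mkey Hsl v0 v0 v0
      rw [aH0] at h
      have h' : Hm * (μ v0 v0 v0 : Matrix (Fin 2) (Fin 2) ℂ)
          - (μ v0 v0 v0 : Matrix (Fin 2) (Fin 2) ℂ) * Hm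
          = (μ v0 v0 v0 : Matrix (Fin 2) (Fin 2) ℂ) + (μ v0 v0 v0 : Matrix (Fin 2) (Fin 2) ℂ)
            + (μ v0 v0 v0 : Matrix (Fin 2) (Fin 2) ℂ) := h
      rw [h']; module
    have z2 : (μ v0 v0 v1 : Matrix (Fin 2) (Fin 2) ℂ) = 0 := by
      apply wzero _ 1 (by norm_num) (by norm_num) (by norm_num)
      have h := mkey Hsl v0 v0 v1
      rw [aH0, aH1, hneg₃] at h
      have h' : Hm * (μ v0 v0 v1 : Matrix (Fin 2) (Fin 2) ℂ)
          - (μ v0 v0 v1 : Matrix (Fin 2) (Fin 2) ℂ) * Hm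
          = (μ v0 v0 v1 : Matrix (Fin 2) (Fin 2) ℂ) + (μ v0 v0 v1 : Matrix (Fin 2) (Fin 2) ℂ)
            + -(μ v0 v0 v1 : Matrix (Fin 2) (Fin 2) ℂ) := h
      rw [h']; module
    have z3 : (μ v0 v1 v1 : Matrix (Fin 2) (Fin 2) ℂ) = 0 := by
      apply wzero _ (-1) (by norm_num) (by norm_num) (by norm_num)
      have h := mkey Hsl v0 v1 v1
      rw [aH0, aH1, hneg₂, hneg₃] at h
      have h' : Hm * (μ v0 v1 v1 : Matrix (Fin 2) (Fin 2) ℂ)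
          - (μ v0 v1 v1 : Matrix (Fin 2) (Fin 2) ℂ) * Hm
          = (μ v0 v1 v1 : Matrix (Fin 2) (Fin 2) ℂ) + -(μ v0 v1 v1 : Matrix (Fin 2) (Fin 2) ℂ)
            + -(μ v0 v1 v1 : Matrix (Fin 2) (Fin 2) ℂ) := h
      rw [h']; module
    have z4 : (μ v1 v1 v1 : Matrix (Fin 2) (Fin 2) ℂ) = 0 := by
      apply wzero _ (-3) (by norm_num) (by norm_num) (by norm_num)
      have h := mkey Hsl v1 v1 v1
      rw [aH1, hneg₁, hneg₂, hneg₃] at h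
      have h' : Hm * (μ v1 v1 v1 : Matrix (Fin 2) (Fin 2) ℂ)
          - (μ v1 v1 v1 : Matrix (Fin 2) (Fin 2) ℂ) * Hm
          = -(μ v1 v1 v1 : Matrix (Fin 2) (Fin 2) ℂ) + -(μ v1 v1 v1 : Matrix (Fin 2) (Fin 2) ℂ)
            + -(μ v1 v1 v1 : Matrix (Fin 2) (Fin 2) ℂ) := h
      rw [h']; module
    have z8 : (μ v0 vf vf : Matrix (Fin 2) (Fin 2) ℂ) = 0 := by
      apply wzero _ 1 (by norm_num) (by norm_num) (by norm_num)
      have h := mkey Hsl v0 vf vf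
      rw [aH0, aXf, hzero₂, hzero₃] at h
      have h' : Hm * (μ v0 vf vf : Matrix (Fin 2) (Fin 2) ℂ)
          - (μ v0 vf vf : Matrix (Fin 2) (Fin 2) ℂ) * Hm
          = (μ v0 vf vf : Matrix (Fin 2) (Fin 2) ℂ) + 0 + 0 := h
      rw [h']; module
    have z9 : (μ v1 vf vf : Matrix (Fin 2) (Fin 2) ℂ) = 0 := by
      apply wzero _ (-1) (by norm_num) (by norm_num) (by norm_num)
      have h := mkey Hsl v1 vf vf
      rw [aH1, aXf, hneg₁, hzero₂, hzero₃] at h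
      have h' : Hm * (μ v1 vf vf : Matrix (Fin 2) (Fin 2) ℂ)
          - (μ v1 vf vf : Matrix (Fin 2) (Fin 2) ℂ) * Hm
          = -(μ v1 vf vf : Matrix (Fin 2) (Fin 2) ℂ) + 0 + 0 := h
      rw [h']; module
    -- the middle component
    have hNwt : Hm * (μ v0 v1 vf : Matrix (Fin 2) (Fin 2) ℂ)
        - (μ v0 v1 vf : Matrix (Fin 2) (Fin 2) ℂ) * Hm = 0 := by
      have h := mkey Hsl v0 v1 vf
      rw [aH0, aH1, aXf, hneg₂, hzero₃] at h
      have h' : Hm * (μ v0 v1 vf : Matrix (Fin 2) (Fin 2) ℂ)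
          - (μ v0 v1 vf : Matrix (Fin 2) (Fin 2) ℂ) * Hm
          = (μ v0 v1 vf : Matrix (Fin 2) (Fin 2) ℂ) + -(μ v0 v1 vf : Matrix (Fin 2) (Fin 2) ℂ)
            + 0 := h
      rw [h']; module
    set t : ℂ := (μ v0 v1 vf : Matrix (Fin 2) (Fin 2) ℂ) 0 0 with hts
    have hod : (!![0, 2 * (μ v0 v1 vf : Matrix (Fin 2) (Fin 2) ℂ) 0 1;
        -2 * (μ v0 v1 vf : Matrix (Fin 2) (Fin 2) ℂ) 1 0, 0] : Matrix (Fin 2) (Fin 2) ℂ)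
        = 0 := by rw [← comm_H, hNwt]
    have hN01 : (μ v0 v1 vf : Matrix (Fin 2) (Fin 2) ℂ) 0 1 = 0 := by
      have e := entr hod 0 1; simp at e; exact e
    have hN10 : (μ v0 v1 vf : Matrix (Fin 2) (Fin 2) ℂ) 1 0 = 0 := by
      have e := entr hod 1 0; simp at e; exact e
    have htr := trsl (μ v0 v1 vf)
    have Nval : (μ v0 v1 vf : Matrix (Fin 2) (Fin 2) ℂ) = !![t, 0; 0, -t] := by
      ext i j
      fin_cases i <;> fin_cases j
      · simp [hts]
      · simpa using hN01
      · simpa using hN10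
      · show (μ v0 v1 vf : Matrix (Fin 2) (Fin 2) ℂ) 1 1 = !![t, 0; 0, -t] 1 1
        rw [show (!![t,0;0,-t] : Matrix (Fin 2) (Fin 2) ℂ) 1 1 = -t by simp]
        linear_combination htr
    have z6 : (μ v0 v1 vf : Matrix (Fin 2) (Fin 2) ℂ) = !![t, 0; 0, -t] := Nval
    have z5 : (μ v0 v0 vf : Matrix (Fin 2) (Fin 2) ℂ) = !![0, -2 * t; 0, 0] := by
      have h := mkey Esl v0 v1 vf
      rw [aE0, aE1, aXf, hzero₁, hzero₃] at h
      have h' : Em * (μ v0 v1 vf : Matrix (Fin 2) (Fin 2) ℂ)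
          - (μ v0 v1 vf : Matrix (Fin 2) (Fin 2) ℂ) * Em
          = 0 + (μ v0 v0 vf : Matrix (Fin 2) (Fin 2) ℂ) + 0 := h
      rw [comm_E, Nval] at h'
      have h'' : (μ v0 v0 vf : Matrix (Fin 2) (Fin 2) ℂ)
          = !![(!![t,0;0,-t] : Matrix (Fin 2) (Fin 2) ℂ) 1 0,
              (!![t,0;0,-t] : Matrix (Fin 2) (Fin 2) ℂ) 1 1
                - (!![t,0;0,-t] : Matrix (Fin 2) (Fin 2) ℂ) 0 0;
              0, -((!![t,0;0,-t] : Matrix (Fin 2) (Fin 2) ℂ) 1 0)] := by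
        rw [h']; abel
      rw [h'']
      ext i j
      fin_cases i <;> fin_cases j <;> simp <;> ring
    have z7 : (μ v1 v1 vf : Matrix (Fin 2) (Fin 2) ℂ) = !![0, 0; 2 * t, 0] := by
      have h := mkey Fsl v0 v1 vf
      rw [aF0, aF1, aXf, hzero₂, hzero₃] at h
      have h' : Fm * (μ v0 v1 vf : Matrix (Fin 2) (Fin 2) ℂ)
          - (μ v0 v1 vf : Matrix (Fin 2) (Fin 2) ℂ) * Fm
          = (μ v1 v1 vf : Matrix (Fin 2) (Fin 2) ℂ) + 0 + 0 := h
      rw [comm_F, Nval] at h'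
      have h'' : (μ v1 v1 vf : Matrix (Fin 2) (Fin 2) ℂ)
          = !![-((!![t,0;0,-t] : Matrix (Fin 2) (Fin 2) ℂ) 0 1), 0;
              (!![t,0;0,-t] : Matrix (Fin 2) (Fin 2) ℂ) 0 0
                - (!![t,0;0,-t] : Matrix (Fin 2) (Fin 2) ℂ) 1 1,
              (!![t,0;0,-t] : Matrix (Fin 2) (Fin 2) ℂ) 0 1] := by
        rw [h']; abel
      rw [h'']
      ext i j
      fin_cases i <;> fin_cases j <;> simp <;> ring
    have z10 : (μ vf vf vf : Matrix (Fin 2) (Fin 2) ℂ) = 0 := by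
      have hH := mkey Hsl vf vf vf
      rw [aXf, hzero₁, hzero₂, hzero₃] at hH
      have hH' : Hm * (μ vf vf vf : Matrix (Fin 2) (Fin 2) ℂ)
          - (μ vf vf vf : Matrix (Fin 2) (Fin 2) ℂ) * Hm = 0 + 0 + 0 := hH
      rw [comm_H] at hH'
      have hE := mkey Esl vf vf vf
      rw [aXf, hzero₁, hzero₂, hzero₃] at hE
      have hE' : Em * (μ vf vf vf : Matrix (Fin 2) (Fin 2) ℂ)
          - (μ vf vf vf : Matrix (Fin 2) (Fin 2) ℂ) * Em = 0 + 0 + 0 := hE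
      rw [comm_E] at hE'
      have e01 := entr hH' 0 1
      have e10 := entr hH' 1 0
      have eE := entr hE' 0 1
      simp at e01 e10 eE
      have htr' := trsl (μ vf vf vf)
      ext i j
      fin_cases i <;> fin_cases j
      · simp only [Fin.zero_eta, Fin.mk_one, Matrix.zero_apply]
        linear_combination (htr' - eE) / 2
      · simpa using e01
      · simpa using e10
      · simp only [Fin.zero_eta, Fin.mk_one, Matrix.zero_apply]
        linear_combination (htr' + eE) / 2
    -- assemble via trilinearity
    refine ⟨t, ?_⟩
    have Gz := ext3 (fun p q r => (μ p q r : Matrix (Fin 2) (Fin 2) ℂ) - Tmap t p q r)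
      (fun p p' q r => by
        have hc : (μ (p + p') q r : Matrix (Fin 2) (Fin 2) ℂ)
            = (μ p q r : Matrix (Fin 2) (Fin 2) ℂ) + (μ p' q r : Matrix (Fin 2) (Fin 2) ℂ) :=
          congrArg Subtype.val (hadd p p' q r)
        show (μ (p + p') q r : Matrix (Fin 2) (Fin 2) ℂ) - Tmap t (p + p') q r
            = ((μ p q r : Matrix (Fin 2) (Fin 2) ℂ) - Tmap t p q r)
              + ((μ p' q r : Matrix (Fin 2) (Fin 2) ℂ) - Tmap t p' q r)
        rw [hc, Tadd]; abel)
      (fun a p q r => by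
        have hc : (μ (a • p) q r : Matrix (Fin 2) (Fin 2) ℂ)
            = a • (μ p q r : Matrix (Fin 2) (Fin 2) ℂ) :=
          congrArg Subtype.val (hsmul a p q r)
        show (μ (a • p) q r : Matrix (Fin 2) (Fin 2) ℂ) - Tmap t (a • p) q r
            = a • ((μ p q r : Matrix (Fin 2) (Fin 2) ℂ) - Tmap t p q r)
        rw [hc, Tsmul, smul_sub])
      (fun p q r => by
        have hc : (μ p q r : Matrix (Fin 2) (Fin 2) ℂ)
            = (μ q p r : Matrix (Fin 2) (Fin 2) ℂ) := congrArg Subtype.val (hsymm₁ p q r)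
        show (μ p q r : Matrix (Fin 2) (Fin 2) ℂ) - Tmap t p q r
            = (μ q p r : Matrix (Fin 2) (Fin 2) ℂ) - Tmap t q p r
        rw [hc, Ts1])
      (fun p q r => by
        have hc : (μ p q r : Matrix (Fin 2) (Fin 2) ℂ)
            = (μ p r q : Matrix (Fin 2) (Fin 2) ℂ) := congrArg Subtype.val (hsymm₂ p q r)
        show (μ p q r : Matrix (Fin 2) (Fin 2) ℂ) - Tmap t p q r
            = (μ p r q : Matrix (Fin 2) (Fin 2) ℂ) - Tmap t p r q
        rw [hc, Ts2])
      (by show (μ v0 v0 v0 : Matrix (Fin 2) (Fin 2) ℂ) - Tmap t v0 v0 v0 = 0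
          rw [z1]
          ext i j
          fin_cases i <;> fin_cases j <;>
            simp [Tentry, v0, e0v, Jmat, Matrix.mulVec, dotProduct, Fin.sum_univ_two])
      (by show (μ v0 v0 v1 : Matrix (Fin 2) (Fin 2) ℂ) - Tmap t v0 v0 v1 = 0
          rw [z2]
          ext i j
          fin_cases i <;> fin_cases j <;>
            simp [Tentry, v0, v1, e0v, e1v, Jmat, Matrix.mulVec, dotProduct,
              Fin.sum_univ_two])
      (by show (μ v0 v1 v1 : Matrix (Fin 2) (Fin 2) ℂ) - Tmap t v0 v1 v1 = 0
          rw [z3]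
          ext i j
          fin_cases i <;> fin_cases j <;>
            simp [Tentry, v0, v1, e0v, e1v, Jmat, Matrix.mulVec, dotProduct,
              Fin.sum_univ_two])
      (by show (μ v1 v1 v1 : Matrix (Fin 2) (Fin 2) ℂ) - Tmap t v1 v1 v1 = 0
          rw [z4]
          ext i j
          fin_cases i <;> fin_cases j <;>
            simp [Tentry, v1, e1v, Jmat, Matrix.mulVec, dotProduct, Fin.sum_univ_two])
      (by show (μ v0 v0 vf : Matrix (Fin 2) (Fin 2) ℂ) - Tmap t v0 v0 vf = 0
          rw [z5]
          ext i j
          fin_cases i <;> fin_cases j <;>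
            simp [Tentry, v0, vf, e0v, Jmat, Matrix.mulVec, dotProduct,
              Fin.sum_univ_two] <;> ring)
      (by show (μ v0 v1 vf : Matrix (Fin 2) (Fin 2) ℂ) - Tmap t v0 v1 vf = 0
          rw [z6]
          ext i j
          fin_cases i <;> fin_cases j <;>
            simp [Tentry, v0, v1, vf, e0v, e1v, Jmat, Matrix.mulVec, dotProduct,
              Fin.sum_univ_two] <;> ring)
      (by show (μ v1 v1 vf : Matrix (Fin 2) (Fin 2) ℂ) - Tmap t v1 v1 vf = 0
          rw [z7]
          ext i j
          fin_cases i <;> fin_cases j <;>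
            simp [Tentry, v1, vf, e1v, Jmat, Matrix.mulVec, dotProduct,
              Fin.sum_univ_two] <;> ring)
      (by show (μ v0 vf vf : Matrix (Fin 2) (Fin 2) ℂ) - Tmap t v0 vf vf = 0
          rw [z8]
          ext i j
          fin_cases i <;> fin_cases j <;>
            simp [Tentry, v0, vf, e0v, Jmat, Matrix.mulVec, dotProduct,
              Fin.sum_univ_two])
      (by show (μ v1 vf vf : Matrix (Fin 2) (Fin 2) ℂ) - Tmap t v1 vf vf = 0
          rw [z9]
          ext i j
          fin_cases i <;> fin_cases j <;>
            simp [Tentry, v1, vf, e1v, Jmat, Matrix.mulVec, dotProduct,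
              Fin.sum_univ_two])
      (by show (μ vf vf vf : Matrix (Fin 2) (Fin 2) ℂ) - Tmap t vf vf vf = 0
          rw [z10]
          ext i j
          fin_cases i <;> fin_cases j <;>
            simp [Tentry, vf, Jmat, Matrix.mulVec, dotProduct, Fin.sum_univ_two])
    intro p q r
    have h := Gz p q r
    have h' : (μ p q r : Matrix (Fin 2) (Fin 2) ℂ) - Tmap t p q r = 0 := h
    exact sub_eq_zero.mp h'
  · intro t y₁ y₂ y₃ y₄
    funext i
    simp only [Matrix.smul_mulVec, Pi.add_apply, Pi.smul_apply, Pi.zero_apply,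
      Matrix.add_mulVec]
    simp [Smat, Jmat, Matrix.mulVec, dotProduct, Fin.sum_univ_two, Matrix.smul_apply]
    fin_cases i <;> simp <;> ring
end
end

section
/- Let η = diag(1,−1,−1,−1) be the 4×4 Minkowski matrix over ℂ, and let p = iso(1,3,ℂ) be the complexified Poincaré algebra, realized as the Lie subalgebra of gl(5,ℂ) of block matrices M(A,b) = [[A,b],[0,0]] with A a 4×4 complex matrix satisfying Aᵀη + ηA = 0 and b ∈ ℂ⁴. Let D be any finite-dimensional complex Lie module over p, with action ρ : p → End(D). Then for every translation element T = M(0,b) ∈ p, the endomorphism ρ(T) of D is nilpotent. (Lemma 4.1, part 1.) -/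
noncomputable section

/-- The Minkowski metric `η = diag(1,−1,−1,−1)` over `ℂ`. -/
def etaC : Matrix (Fin 4) (Fin 4) ℂ := Matrix.diagonal ![1, -1, -1, -1]

/-- The block matrix `M(A,b) = [[A,b],[0,0]] ∈ gl(5,ℂ)`. -/
def MblkC (A : Matrix (Fin 4) (Fin 4) ℂ) (b : Fin 4 → ℂ) :
    Matrix (Fin 4 ⊕ Fin 1) (Fin 4 ⊕ Fin 1) ℂ :=
  Matrix.fromBlocks A (Matrix.of fun i _ => b i) 0 0

/-- The Lorentz condition `Aᵀη + ηA = 0` defining `iso(1,3,ℂ)` as the Lie algebra of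
block matrices `M(A,b)` with `A` Lorentz. -/
def IsLorentzC (A : Matrix (Fin 4) (Fin 4) ℂ) : Prop :=
  A.transpose * etaC + etaC * A = 0

/-!
If `⁅H, X⁆ = c • X` with `c ≠ 0`, then `X` shifts each generalized eigenspace of `H` by `c`; as `H`
has only finitely many eigenvalues, some power of `X` kills all of them, so `X` is nilpotent.
Since `⁅M(A,0), M(0,w)⁆ = M(0,Aw)`, this applies to every translation `M(0,w)` with `w` an
eigenvector of a Lorentz matrix `A` for a nonzero eigenvalue. The generator of a boost in the
`(0,1)`-plane plus a rotation in the `(2,3)`-plane has the null vectors `(1,±1,0,0)`, `(0,0,1,±i)`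
as eigenvectors, with the four distinct nonzero eigenvalues `±1`, `∓i`. Translations commute, so
the translations acting nilpotently form a subspace, and it contains a basis of `ℂ⁴`.
-/

open Set Filter
open scoped Matrix

lemma Set.Finite.exists_forall_add_nsmul_notMem {K : Type*} [Field K] [CharZero K] {S : Set K}
    (hS : S.Finite) {c : K} (hc : c ≠ 0) : ∃ N : ℕ, ∀ μ ∈ S, μ + N • c ∉ S := by
  refine ((eventually_all_finite (l := atTop) hS).2 fun μ _ => ?_).exists
  have hinj : Function.Injective fun n : ℕ => μ + n • c := fun m n hmn => by
    simpa [nsmul_eq_mul, hc] using hmn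
  rw [← Nat.cofinite_eq_atTop]
  exact (hS.preimage hinj.injOn).eventually_cofinite_notMem

namespace Module.End

variable {K V : Type*} [Field K] [AddCommGroup V] [Module K V] {H X : End K V} {c : K}

lemma maxGenEigenspace_eq_bot_iff {μ : K} : H.maxGenEigenspace μ = ⊥ ↔ ¬ H.HasEigenvalue μ := by
  rw [iff_not_comm]
  exact (hasUnifEigenvalue_iff_hasUnifEigenvalue_one (k := ⊤) (by simp)).symm

lemma mapsTo_maxGenEigenspace_add_of_lie_eq_smul (h : ⁅H, X⁆ = c • X) (μ : K) :
    MapsTo X (H.maxGenEigenspace μ) (H.maxGenEigenspace (μ + c)) := by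
  have hsemi : SemiconjBy X (H - μ • 1) (H - (μ + c) • 1) := by
    rw [Ring.lie_def] at h
    rw [SemiconjBy, mul_sub, sub_mul, mul_smul_comm, smul_mul_assoc, mul_one, one_mul, add_smul,
      ← h]
    abel
  intro v hv
  simp only [SetLike.mem_coe, mem_maxGenEigenspace] at hv ⊢
  obtain ⟨k, hk⟩ := hv
  exact ⟨k, by rw [← mul_apply, ← (hsemi.pow_right k).eq, mul_apply, hk, map_zero]⟩

lemma mapsTo_maxGenEigenspace_add_nsmul_of_lie_eq_smul (h : ⁅H, X⁆ = c • X) (μ : K) (n : ℕ) :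
    MapsTo (X ^ n) (H.maxGenEigenspace μ) (H.maxGenEigenspace (μ + n • c)) := by
  induction n with
  | zero => simpa [one_eq_id] using mapsTo_id _
  | succ n ih =>
    rw [pow_succ', succ_nsmul, ← add_assoc, coe_mul]
    exact (mapsTo_maxGenEigenspace_add_of_lie_eq_smul h _).comp ih

theorem isNilpotent_of_lie_eq_smul [IsAlgClosed K] [CharZero K] [FiniteDimensional K V]
    (hc : c ≠ 0) (h : ⁅H, X⁆ = c • X) : IsNilpotent X := by
  obtain ⟨N, hN⟩ := H.finite_hasEigenvalue.exists_forall_add_nsmul_notMem hc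
  refine ⟨N, LinearMap.ker_eq_top.mp (eq_top_iff.mpr ?_)⟩
  rw [← H.iSup_maxGenEigenspace_eq_top]
  refine iSup_le fun μ => ?_
  by_cases hμ : H.HasEigenvalue μ
  · intro v hv
    have hv' := mapsTo_maxGenEigenspace_add_nsmul_of_lie_eq_smul h μ N hv
    rwa [maxGenEigenspace_eq_bot_iff.mpr (hN μ hμ)] at hv'
  · simp [maxGenEigenspace_eq_bot_iff.mpr hμ]

end Module.End

def LinearMap.isNilpotentSubmodule {R M A : Type*} [CommSemiring R] [AddCommMonoid M]
    [Module R M] [Semiring A] [Algebra R A] (τ : M →ₗ[R] A) (hτ : ∀ x y, Commute (τ x) (τ y)) :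
    Submodule R M where
  carrier := {x | IsNilpotent (τ x)}
  add_mem' {x y} hx hy := by
    show IsNilpotent (τ (x + y))
    rw [map_add]
    exact (hτ x y).isNilpotent_add hx hy
  zero_mem' := by simp
  smul_mem' r x hx := by
    show IsNilpotent (τ (r • x))
    rw [map_smul]
    exact hx.smul r

lemma MblkC_add (A A' : Matrix (Fin 4) (Fin 4) ℂ) (b b' : Fin 4 → ℂ) :
    MblkC A b + MblkC A' b' = MblkC (A + A') (b + b') := by
  ext (i | i) (j | j) <;> simp [MblkC]

lemma MblkC_smul (c : ℂ) (A : Matrix (Fin 4) (Fin 4) ℂ) (b : Fin 4 → ℂ) :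
    c • MblkC A b = MblkC (c • A) (c • b) := by
  ext (i | i) (j | j) <;> simp [MblkC]

lemma MblkC_lie (A A' : Matrix (Fin 4) (Fin 4) ℂ) (b b' : Fin 4 → ℂ) :
    ⁅MblkC A b, MblkC A' b'⁆ = MblkC (A * A' - A' * A) (A *ᵥ b' - A' *ᵥ b) := by
  ext (i | i) (j | j) <;>
    simp [MblkC, Ring.lie_def, Matrix.fromBlocks_multiply, Matrix.mul_apply, Matrix.mulVec,
      dotProduct]

lemma isLorentzC_zero : IsLorentzC 0 := by
  simp [IsLorentzC]

def translationAction {D : Type*} [AddCommGroup D] [Module ℂ D]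
    (ρ : Matrix (Fin 4 ⊕ Fin 1) (Fin 4 ⊕ Fin 1) ℂ → Module.End ℂ D)
    (hadd : ∀ b b', ρ (MblkC 0 b + MblkC 0 b') = ρ (MblkC 0 b) + ρ (MblkC 0 b'))
    (hsmul : ∀ (c : ℂ) b, ρ (c • MblkC 0 b) = c • ρ (MblkC 0 b)) :
    (Fin 4 → ℂ) →ₗ[ℂ] Module.End ℂ D where
  toFun b := ρ (MblkC 0 b)
  map_add' b b' := by rw [← hadd, MblkC_add, add_zero]
  map_smul' c b := by rw [RingHom.id_apply, ← hsmul, MblkC_smul, smul_zero]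

def boostRotation : Matrix (Fin 4) (Fin 4) ℂ :=
  !![0, 1, 0, 0; 1, 0, 0, 0; 0, 0, 0, -1; 0, 0, 1, 0]

def nullVector : Fin 4 → Fin 4 → ℂ :=
  ![![1, 1, 0, 0], ![1, -1, 0, 0], ![0, 0, 1, Complex.I], ![0, 0, 1, -Complex.I]]

def nullEigenvalue : Fin 4 → ℂ := ![1, -1, -Complex.I, Complex.I]

lemma isLorentzC_boostRotation : IsLorentzC boostRotation := by
  rw [IsLorentzC, etaC]
  ext i j
  fin_cases i <;> fin_cases j <;> simp [boostRotation, Matrix.mul_apply, Fin.sum_univ_four]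

lemma boostRotation_mulVec_nullVector (i : Fin 4) :
    boostRotation *ᵥ nullVector i = nullEigenvalue i • nullVector i := by
  ext j
  fin_cases i <;> fin_cases j <;>
    simp [boostRotation, nullVector, nullEigenvalue, Matrix.mulVec, dotProduct, Fin.sum_univ_four]

lemma nullEigenvalue_ne_zero (i : Fin 4) : nullEigenvalue i ≠ 0 := by
  fin_cases i <;> simp [nullEigenvalue]

lemma nullEigenvalue_injective : Function.Injective nullEigenvalue := by
  intro i j hij
  fin_cases i <;> fin_cases j <;> first | rfl | norm_num [nullEigenvalue, Complex.ext_iff] at hij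

lemma span_nullVector : Submodule.span ℂ (range nullVector) = ⊤ := by
  have hne : ∀ i, nullVector i ≠ 0 := fun i => by
    fin_cases i <;> simp [nullVector, funext_iff, Fin.forall_fin_succ]
  have hind : LinearIndependent ℂ nullVector :=
    Module.End.eigenvectors_linearIndependent' (Matrix.toLin' boostRotation) nullEigenvalue
      nullEigenvalue_injective nullVector fun i =>
        ⟨Module.End.mem_eigenspace_iff.mpr (boostRotation_mulVec_nullVector i), hne i⟩
  exact hind.span_eq_top_of_card_eq_finrank (by simp)

/-- Lemma 4.1, part 1: in every finite-dimensional complex Lie module `D` over the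
complexified Poincaré algebra `p = iso(1,3,ℂ)` (given by a map `ρ` which is linear on
`p` and respects the bracket), each translation element `M(0,b)` acts as a nilpotent
endomorphism of `D`. -/
theorem translations_act_nilpotently
    {D : Type*} [AddCommGroup D] [Module ℂ D] [FiniteDimensional ℂ D]
    (ρ : Matrix (Fin 4 ⊕ Fin 1) (Fin 4 ⊕ Fin 1) ℂ → Module.End ℂ D)
    (hadd : ∀ (A : Matrix (Fin 4) (Fin 4) ℂ) (b : Fin 4 → ℂ)
      (A' : Matrix (Fin 4) (Fin 4) ℂ) (b' : Fin 4 → ℂ),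
      IsLorentzC A → IsLorentzC A' →
      ρ (MblkC A b + MblkC A' b') = ρ (MblkC A b) + ρ (MblkC A' b'))
    (hsmul : ∀ (c : ℂ) (A : Matrix (Fin 4) (Fin 4) ℂ) (b : Fin 4 → ℂ),
      IsLorentzC A → ρ (c • MblkC A b) = c • ρ (MblkC A b))
    (hbrk : ∀ (A : Matrix (Fin 4) (Fin 4) ℂ) (b : Fin 4 → ℂ)
      (A' : Matrix (Fin 4) (Fin 4) ℂ) (b' : Fin 4 → ℂ),
      IsLorentzC A → IsLorentzC A' →
      ρ ⁅MblkC A b, MblkC A' b'⁆ = ⁅ρ (MblkC A b), ρ (MblkC A' b')⁆) :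
    ∀ b : Fin 4 → ℂ, IsNilpotent (ρ (MblkC 0 b)) := by
  have h0 := isLorentzC_zero
  set τ := translationAction ρ (hadd 0 · 0 · h0 h0) (hsmul · 0 · h0)
  have hcomm : ∀ x y, Commute (τ x) (τ y) := fun x y => by
    rw [commute_iff_lie_eq]
    calc ⁅τ x, τ y⁆ = ρ ⁅MblkC 0 x, MblkC 0 y⁆ := (hbrk 0 x 0 y h0 h0).symm
      _ = τ 0 := congrArg ρ (by simp [MblkC_lie])
      _ = 0 := map_zero τ
  have hnull : ∀ i, IsNilpotent (τ (nullVector i)) := fun i => by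
    refine Module.End.isNilpotent_of_lie_eq_smul (H := ρ (MblkC boostRotation 0))
      (nullEigenvalue_ne_zero i) ?_
    calc ⁅ρ (MblkC boostRotation 0), τ (nullVector i)⁆
        = ρ ⁅MblkC boostRotation 0, MblkC 0 (nullVector i)⁆ :=
          (hbrk _ _ _ _ isLorentzC_boostRotation h0).symm
      _ = τ (boostRotation *ᵥ nullVector i) := congrArg ρ (by simp [MblkC_lie])
      _ = nullEigenvalue i • τ (nullVector i) := by
          rw [boostRotation_mulVec_nullVector, map_smul]
  have htop : τ.isNilpotentSubmodule hcomm = ⊤ := by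
    rw [eq_top_iff, ← span_nullVector, Submodule.span_le, range_subset_iff]
    exact hnull
  exact fun b => htop.ge (Submodule.mem_top (x := b))
end
end

section
/- Let g₀ = ℂX and g₁ = ℂY be 1-dimensional complex vector spaces, with g₀ abelian, the action of g₀ on g₁ given by X·Y = α₁Y, and the symmetric 3-bracket given by μ(Y,Y,Y) = α₂X, where α₁, α₂ ∈ ℂ. Then these data satisfy the Jacobi identities J1–J4 of an elementary Lie algebra of order 3 if and only if α₁α₂ = 0. (Part of Proposition 5.2 classifying two-dimensional elementary Lie algebras of order 3.) -/
/-- Part of Proposition 5.2: on `g₀ = ℂX`, `g₁ = ℂY` (both one-dimensional, `g₀`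
abelian), with action `X·Y = α₁Y` and symmetric 3-bracket `μ(Y,Y,Y) = α₂X`, the Jacobi
identities J1–J4 of an elementary Lie algebra of order 3 hold if and only if
`α₁α₂ = 0`.  (Identifying `g₀ ≅ ℂ`, `g₁ ≅ ℂ` via the bases `X`, `Y`, the bracket on
`g₀` is zero, the action is `act x y = α₁xy` and the 3-bracket is
`μ(y₁,y₂,y₃) = α₂ y₁y₂y₃`.) -/
theorem two_dim_order3_jacobi_iff (α₁ α₂ : ℂ) :
    (let br : ℂ → ℂ → ℂ := fun _ _ => 0
     let act : ℂ → ℂ → ℂ := fun x y => α₁ * x * y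
     let μ : ℂ → ℂ → ℂ → ℂ := fun y₁ y₂ y₃ => α₂ * (y₁ * y₂ * y₃)
     -- J1 : Jacobi identity for the (abelian) bracket of g₀
     (∀ x x' x'' : ℂ, br (br x x') x'' + br (br x' x'') x + br (br x'' x) x' = 0) ∧
     -- J2 : g₁ is a g₀-module
     (∀ x x' y : ℂ, act (br x x') y = act x (act x' y) - act x' (act x y)) ∧
     -- J3 : equivariance of μ
     (∀ x y₁ y₂ y₃ : ℂ, br x (μ y₁ y₂ y₃) =
        μ (act x y₁) y₂ y₃ + μ y₁ (act x y₂) y₃ + μ y₁ y₂ (act x y₃)) ∧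
     -- J4
     (∀ y₁ y₂ y₃ y₄ : ℂ,
        act (μ y₂ y₃ y₄) y₁ + act (μ y₁ y₃ y₄) y₂ + act (μ y₁ y₂ y₄) y₃ +
          act (μ y₁ y₂ y₃) y₄ = 0))
    ↔ α₁ * α₂ = 0 := by
  simp only
  constructor
  · rintro ⟨-, -, h3, -⟩
    have h := h3 1 1 1 1
    linear_combination (-(1:ℂ)/3) * h
  · intro h
    refine ⟨by intro _ _ _; ring, by intro _ _ _; ring, ?_, ?_⟩
    · intro x y₁ y₂ y₃
      linear_combination (-3 * x * y₁ * y₂ * y₃) * h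
    · intro y₁ y₂ y₃ y₄
      linear_combination (4 * y₁ * y₂ * y₃ * y₄) * h
end

section
/- A change of basis (h₀,h₁) ∈ ℂ* × ℂ* transforms the structure constants (α₁,α₂) of a two-dimensional elementary Lie algebra of order 3 into (h₀α₁, h₀^{-1}h₁³α₂). For every (α₁,α₂) ∈ ℂ² with α₁α₂ = 0 there exist h₀, h₁ ∈ ℂ* such that (h₀α₁, h₀^{-1}h₁³α₂) equals exactly one of (0,1), (1,0), (0,0). Consequently every two-dimensional elementary Lie algebra of order 3 is isomorphic to exactly one of: g₁³ with {Y,Y,Y} = X, [X,Y] = 0; g₂³ with [X,Y] = Y, {Y,Y,Y} = 0; or the trivial algebra g₃³. (Proposition 5.2.) -/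
/-- Proposition 5.2: a change of basis `(h₀,h₁) ∈ ℂ* × ℂ*` (`X ↦ h₀X`, `Y ↦ h₁Y`)
transforms the structure constants `(α₁,α₂)` of a two-dimensional elementary Lie algebra
of order 3 (`X·Y = α₁Y`, `μ(Y,Y,Y) = α₂X`) into `(h₀α₁, h₀⁻¹h₁³α₂)`, and every
`(α₁,α₂)` with `α₁α₂ = 0` can be brought to exactly one of the canonical forms
`(0,1)` (the algebra `g₁³`), `(1,0)` (the algebra `g₂³`), `(0,0)` (the trivial algebra
`g₃³`). -/
theorem two_dim_order3_classification (α₁ α₂ : ℂ) (h : α₁ * α₂ = 0) :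
    -- the transformation law of the structure constants under the change of basis
    (∀ h₀ h₁ : ℂ, h₀ ≠ 0 → h₁ ≠ 0 →
      (∀ x y : ℂ, h₁⁻¹ * (α₁ * (h₀ * x) * (h₁ * y)) = (h₀ * α₁) * x * y) ∧
      (∀ y₁ y₂ y₃ : ℂ, h₀⁻¹ * (α₂ * ((h₁ * y₁) * (h₁ * y₂) * (h₁ * y₃))) =
        (h₀⁻¹ * h₁ ^ 3 * α₂) * (y₁ * y₂ * y₃))) ∧
    -- existence and uniqueness of the canonical form
    (∃! c : ℂ × ℂ, c ∈ ({(0, 1), (1, 0), (0, 0)} : Set (ℂ × ℂ)) ∧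
      ∃ h₀ h₁ : ℂ, h₀ ≠ 0 ∧ h₁ ≠ 0 ∧ (h₀ * α₁, h₀⁻¹ * h₁ ^ 3 * α₂) = c) := by
  constructor
  · intro h₀ h₁ h₀ne h₁ne
    constructor
    · intro x y; field_simp
    · intro y₁ y₂ y₃; field_simp
  · rcases eq_or_ne α₁ 0 with hα₁ | hα₁
    · rcases eq_or_ne α₂ 0 with hα₂ | hα₂
      · -- (0,0)
        refine ⟨(0, 0), ⟨by simp, 1, 1, one_ne_zero, one_ne_zero, by
          simp [hα₁, hα₂]⟩, ?_⟩
        rintro ⟨c1, c2⟩ ⟨hmem, h₀, h₁, h₀ne, h₁ne, heq⟩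
        simp only [Prod.mk.injEq] at heq
        simp [hα₁, hα₂] at heq
        simp [← heq.1, ← heq.2]
      · -- (0,1)
        obtain ⟨z, hz⟩ := Complex.isAlgClosed.exists_pow_nat_eq α₂⁻¹ (n := 3) (by norm_num)
        have hzne : z ≠ 0 := by
          intro h0; rw [h0] at hz; simp at hz
          exact hα₂ (by simpa using congrArg Inv.inv hz.symm)
        refine ⟨(0, 1), ⟨by simp, 1, z, one_ne_zero, hzne, by
          simp [hα₁, hz, inv_mul_cancel₀ hα₂]⟩, ?_⟩
        rintro ⟨c1, c2⟩ ⟨hmem, h₀, h₁, h₀ne, h₁ne, heq⟩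
        simp only [Prod.mk.injEq] at heq
        have hc1 : c1 = 0 := by rw [← heq.1, hα₁]; ring
        have hc2 : c2 ≠ 0 := by
          rw [← heq.2]
          exact mul_ne_zero (mul_ne_zero (inv_ne_zero h₀ne) (pow_ne_zero _ h₁ne)) hα₂
        rcases hmem with h' | h' | h' <;> simp_all
    · -- (1,0)
      have hα₂ : α₂ = 0 := by
        rcases mul_eq_zero.mp h with h' | h'
        · exact absurd h' hα₁
        · exact h'
      refine ⟨(1, 0), ⟨by simp, α₁⁻¹, 1, inv_ne_zero hα₁, one_ne_zero, by
        simp [hα₂, inv_mul_cancel₀ hα₁]⟩, ?_⟩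
      rintro ⟨c1, c2⟩ ⟨hmem, h₀, h₁, h₀ne, h₁ne, heq⟩
      simp only [Prod.mk.injEq] at heq
      have hc1 : c1 ≠ 0 := by rw [← heq.1]; exact mul_ne_zero h₀ne hα₁
      have hc2 : c2 = 0 := by rw [← heq.2, hα₂]; ring
      rcases hmem with h' | h' | h' <;> simp_all
end

section
/- Consider the action of ℂ* × ℂ* on ℂ² given by (h₀,h₁)·(α₁,α₂) = (h₀α₁, h₀^{-1}h₁³α₂), and let O₁ be the orbit of (1,0) and O₂ the orbit of (0,1). Then, taking closures in ℂ² (with its standard topology): the closure of O₁ equals ℂ × {0}, the closure of O₂ equals {0} × ℂ, and the set F = {(α₁,α₂) ∈ ℂ² : α₁α₂ = 0} (the variety of two-dimensional elementary Lie algebras of order 3) equals the union of these two orbit closures; neither orbit closure is contained in the other. (Corollary 5.3: F₁,₁ is the union of the two components, the orbit closures of g₁³ and g₂³.) -/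
/-- The orbit of a point of the variety `F₁,₁ = {(α₁,α₂) : α₁α₂ = 0}` of two-dimensional
elementary Lie algebras of order 3 under the change-of-basis action
`(h₀,h₁)·(α₁,α₂) = (h₀α₁, h₀⁻¹h₁³α₂)` of `ℂ* × ℂ*`. -/
def orbit2 (a : ℂ × ℂ) : Set (ℂ × ℂ) :=
  {p | ∃ h₀ h₁ : ℂ, h₀ ≠ 0 ∧ h₁ ≠ 0 ∧ p = (h₀ * a.1, h₀⁻¹ * h₁ ^ 3 * a.2)}

lemma orbit2_one_zero : orbit2 (1, 0) = ({0}ᶜ : Set ℂ) ×ˢ ({0} : Set ℂ) := by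
  ext p
  constructor
  · rintro ⟨h₀, h₁, h0, h1, rfl⟩
    simp [h0]
  · rintro ⟨h1, h2⟩
    exact ⟨p.1, 1, h1, one_ne_zero, by simp at h2 ⊢; simp [Prod.ext_iff, h2]⟩

lemma orbit2_zero_one : orbit2 (0, 1) = ({0} : Set ℂ) ×ˢ ({0}ᶜ : Set ℂ) := by
  ext p
  constructor
  · rintro ⟨h₀, h₁, h0, h1, rfl⟩
    simp [h0, pow_ne_zero _ h1]
  · rintro ⟨h1, h2⟩
    refine ⟨p.2⁻¹, 1, inv_ne_zero h2, one_ne_zero, ?_⟩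
    simp at h1 h2 ⊢
    simp [Prod.ext_iff, h1]

lemma cl1 : closure (orbit2 (1, 0)) = {p : ℂ × ℂ | p.2 = 0} := by
  rw [orbit2_one_zero, closure_prod_eq, dense_compl_singleton (0 : ℂ) |>.closure_eq,
    closure_singleton]
  ext p; simp [Set.mem_prod, Prod.ext_iff, eq_comm]

lemma cl2 : closure (orbit2 (0, 1)) = {p : ℂ × ℂ | p.1 = 0} := by
  rw [orbit2_zero_one, closure_prod_eq, dense_compl_singleton (0 : ℂ) |>.closure_eq,
    closure_singleton]
  ext p; simp [Set.mem_prod, Prod.ext_iff, eq_comm]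

/-- Corollary 5.3: with `O₁` the orbit of `(1,0)` (the algebra `g₂³`, `[X,Y]=Y`) and
`O₂` the orbit of `(0,1)` (the algebra `g₁³`, `{Y,Y,Y}=X`), one has
`closure O₁ = ℂ × {0}`, `closure O₂ = {0} × ℂ`, the variety
`F = {(α₁,α₂) : α₁α₂ = 0}` is the union of these two orbit closures, and neither orbit
closure is contained in the other. -/
theorem two_dim_order3_variety_components :
    closure (orbit2 (1, 0)) = {p : ℂ × ℂ | p.2 = 0} ∧
    closure (orbit2 (0, 1)) = {p : ℂ × ℂ | p.1 = 0} ∧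
    {p : ℂ × ℂ | p.1 * p.2 = 0} = closure (orbit2 (1, 0)) ∪ closure (orbit2 (0, 1)) ∧
    ¬ closure (orbit2 (1, 0)) ⊆ closure (orbit2 (0, 1)) ∧
    ¬ closure (orbit2 (0, 1)) ⊆ closure (orbit2 (1, 0)) := by
  refine ⟨cl1, cl2, ?_, ?_, ?_⟩
  · rw [cl1, cl2]; ext p; simp [mul_eq_zero, or_comm]
  · rw [cl1, cl2]
    intro h
    have := h (show ((1 : ℂ), (0 : ℂ)) ∈ _ by simp)
    simp at this
  · rw [cl1, cl2]
    intro h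
    have := h (show ((0 : ℂ), (1 : ℂ)) ∈ _ by simp)
    simp at this
end

section
/- Let Ĝ = diag(1,−1,−1,−1,1) and let so(2,3) = {x ∈ gl(5,ℝ) : xᵀĜ + Ĝx = 0}, with standard generators M_{AB} (0 ≤ A < B ≤ 4) given by (M_{AB})^C{}_D = Ĝ_{BD}δ^C_A − Ĝ_{AD}δ^C_B. On the order-3 algebra so(2,3) ⊕ ad so(2,3) with 3-bracket μ(x,y,z) = B(x,y)z + B(y,z)x + B(z,x)y, B(x,y) = −(1/2)Tr(xy), and g₁-generators J_{AB} (the copies of M_{AB}), perform for t ≠ 0 the change of basis L_{mn} = M_{mn}, P_m = t³M_{m4} (0 ≤ m < n ≤ 3) in g₀ and V_{mn} = tJ_{mn}, V_m = tJ_{m4} in g₁. Then every Lie bracket, module action, and 3-bracket among the rescaled generators, expanded in the rescaled basis, has coefficients that are polynomial in t, and their values at t = 0 are exactly the brackets of the contracted algebra (lege-mica): in particular [P_m,P_p] = −t⁶L_{mp} → 0, P_m·V_{pq} → 0, P_m·V_p → 0, μ(V_{mn},V_{pq},V_{rs}) → 0, μ(V_{mn},V_p,V_r) → 0, while μ(V_{mn},V_{pq},V_r)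 = (η_{mp}η_{nq} − η_{mq}η_{np})P_r and μ(V_m,V_p,V_r) = η_{mp}P_r + η_{mr}P_p + η_{pr}P_m hold exactly for all t ≠ 0, and the Lorentz brackets are unchanged (η = diag(1,−1,−1,−1)). (This realizes the Poincaré algebra of order 3 (lege-mica) as an Inönü–Wigner contraction of so(2,3) ⊕ ad so(2,3).) -/
noncomputable section

/-- `Ĝ = diag(1,−1,−1,−1,1)`, the invariant metric of `so(2,3)`. -/
def Ghat : Matrix (Fin 5) (Fin 5) ℝ := Matrix.diagonal ![1, -1, -1, -1, 1]

/-- The standard generators of `so(2,3) = {x ∈ gl(5,ℝ) : xᵀĜ + Ĝx = 0}`: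
`(M_{AB})^C{}_D = Ĝ_{BD}δ^C_A − Ĝ_{AD}δ^C_B`. -/
def Mgen (A B : Fin 5) : Matrix (Fin 5) (Fin 5) ℝ :=
  Matrix.of fun C D =>
    Ghat B D * (if C = A then 1 else 0) - Ghat A D * (if C = B then 1 else 0)

/-- The invariant form `B(x,y) = −(1/2)Tr(xy)`. -/
def Bso5 (x y : Matrix (Fin 5) (Fin 5) ℝ) : ℝ := -(1 / 2) * Matrix.trace (x * y)

/-- The 3-bracket of the order-3 algebra `so(2,3) ⊕ ad so(2,3)`:
`μ(x,y,z) = B(x,y)z + B(y,z)x + B(z,x)y`. -/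
def muSO23 (x y z : Matrix (Fin 5) (Fin 5) ℝ) : Matrix (Fin 5) (Fin 5) ℝ :=
  Bso5 x y • z + Bso5 y z • x + Bso5 z x • y

/-- `η = diag(1,−1,−1,−1)`, the Minkowski metric (restriction of `Ĝ`). -/
def eta4 (m n : Fin 4) : ℝ := Ghat m.castSucc n.castSucc

/-- Unrescaled Lorentz generators `L_{mn} = M_{mn}` (`0 ≤ m,n ≤ 3`) of the contraction. -/
def Lgen (m n : Fin 4) : Matrix (Fin 5) (Fin 5) ℝ := Mgen m.castSucc n.castSucc

/-- Rescaled translation generators `P_m = t³ M_{m4}`. -/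
def Pgen (t : ℝ) (m : Fin 4) : Matrix (Fin 5) (Fin 5) ℝ := t ^ 3 • Mgen m.castSucc 4

/-- Rescaled `g₁`-generators `V_{mn} = t J_{mn}` (with `J_{AB}` the copy of `M_{AB}` in
the adjoint module `ad so(2,3)`). -/
def V2gen (t : ℝ) (m n : Fin 4) : Matrix (Fin 5) (Fin 5) ℝ := t • Mgen m.castSucc n.castSucc

/-- Rescaled `g₁`-generators `V_m = t J_{m4}`. -/
def V1gen (t : ℝ) (m : Fin 4) : Matrix (Fin 5) (Fin 5) ℝ := t • Mgen m.castSucc 4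

/-!
Write `M_{AB} = e_A ⊗ g_B − e_B ⊗ g_A` for a symmetric metric `g`. Products of these rank-one
matrices contract through `g`, which gives the `so(g)` relations
`[M_{AB}, M_{CD}] = g_{BC}M_{AD} − g_{BD}M_{AC} − g_{AC}M_{BD} + g_{AD}M_{BC}` and
`B(M_{AB}, M_{CD}) = g_{AC}g_{BD} − g_{AD}g_{BC}`. Every relation of the contraction is one of
these, multiplied by the power of `t` carried by each rescaled generator; `Ĝ_{m4} = 0` and
`Ĝ_{44} = 1` decide which terms survive, and the surplus powers of `t` are the ones that
vanish in the limit.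
-/

namespace Ring

variable {R A : Type*} [CommRing R] [Ring A] [Algebra R A]

theorem smul_lie (r : R) (x y : A) : ⁅r • x, y⁆ = r • ⁅x, y⁆ := by
  rw [lie_def, lie_def, smul_mul_assoc, mul_smul_comm, smul_sub]

theorem lie_smul (r : R) (x y : A) : ⁅x, r • y⁆ = r • ⁅x, y⁆ := by
  rw [lie_def, lie_def, smul_mul_assoc, mul_smul_comm, smul_sub]

end Ring

namespace Matrix

variable {n R : Type*} [DecidableEq n] [CommRing R]

def soGen (g : Matrix n n R) (A B : n) : Matrix n n R :=
  vecMulVec (Pi.single A 1) (g B) - vecMulVec (Pi.single B 1) (g A)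

theorem soGen_self (g : Matrix n n R) (A : n) : soGen g A A = 0 :=
  sub_self _

theorem soGen_swap (g : Matrix n n R) (A B : n) : soGen g B A = -soGen g A B :=
  (neg_sub _ _).symm

variable [Fintype n]

theorem soGen_mul_soGen (g : Matrix n n R) (A B C D : n) :
    soGen g A B * soGen g C D =
      g B C • vecMulVec (Pi.single A 1) (g D) - g B D • vecMulVec (Pi.single A 1) (g C) -
        g A C • vecMulVec (Pi.single B 1) (g D) + g A D • vecMulVec (Pi.single B 1) (g C) := by
  simp only [soGen, sub_mul, mul_sub, vecMulVec_mul_vecMulVec, dotProduct_single, mul_one,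
    vecMulVec_smul]
  abel

theorem lie_soGen {g : Matrix n n R} (hg : g.IsSymm) (A B C D : n) :
    ⁅soGen g A B, soGen g C D⁆ =
      g B C • soGen g A D - g B D • soGen g A C - g A C • soGen g B D + g A D • soGen g B C := by
  rw [Ring.lie_def, soGen_mul_soGen, soGen_mul_soGen, hg.apply D A, hg.apply D B, hg.apply C A,
    hg.apply C B]
  simp only [soGen, smul_sub]
  abel

theorem trace_soGen_mul_soGen {g : Matrix n n R} (hg : g.IsSymm) (A B C D : n) :
    trace (soGen g A B * soGen g C D) = 2 * (g A D * g B C - g A C * g B D) := by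
  simp only [soGen_mul_soGen, trace_add, trace_sub, trace_smul, trace_vecMulVec,
    single_dotProduct, one_mul, smul_eq_mul, hg.apply D A, hg.apply D B, hg.apply C A,
    hg.apply C B]
  ring

end Matrix

open Matrix

theorem Mgen_eq_soGen (A B : Fin 5) : Mgen A B = soGen Ghat A B := by
  ext C D
  simp [Mgen, soGen, vecMulVec_apply, Pi.single_apply, mul_comm]

theorem Ghat_isSymm : Ghat.IsSymm :=
  isSymm_diagonal _

theorem lie_Mgen (A B C D : Fin 5) : ⁅Mgen A B, Mgen C D⁆ =
    Ghat B C • Mgen A D - Ghat B D • Mgen A C - Ghat A C • Mgen B D + Ghat A D • Mgen B C := by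
  simp only [Mgen_eq_soGen, lie_soGen Ghat_isSymm]

theorem Bso5_Mgen (A B C D : Fin 5) :
    Bso5 (Mgen A B) (Mgen C D) = Ghat A C * Ghat B D - Ghat A D * Ghat B C := by
  rw [Bso5, Mgen_eq_soGen, Mgen_eq_soGen, trace_soGen_mul_soGen Ghat_isSymm]
  ring

theorem Mgen_self (A : Fin 5) : Mgen A A = 0 := by
  rw [Mgen_eq_soGen, soGen_self]

theorem Mgen_swap (A B : Fin 5) : Mgen B A = -Mgen A B := by
  rw [Mgen_eq_soGen, Mgen_eq_soGen, soGen_swap]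

theorem Ghat_castSucc_four (m : Fin 4) : Ghat m.castSucc 4 = 0 :=
  diagonal_apply_ne _ (Fin.castSucc_lt_last m).ne

theorem Ghat_four_castSucc (m : Fin 4) : Ghat 4 m.castSucc = 0 :=
  diagonal_apply_ne _ (Fin.castSucc_lt_last m).ne'

theorem Ghat_four_four : Ghat 4 4 = 1 := rfl

theorem muSO23_smul_smul_smul (a b c : ℝ) (x y z : Matrix (Fin 5) (Fin 5) ℝ) :
    muSO23 (a • x) (b • y) (c • z) = (a * b * c) • muSO23 x y z := by
  simp only [muSO23, Bso5, smul_mul_smul_comm, trace_smul, smul_eq_mul]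
  module

section Contraction

variable (t : ℝ)

theorem lie_Lgen_Lgen (m n p q : Fin 4) : ⁅Lgen m n, Lgen p q⁆ =
    eta4 n q • Lgen p m - eta4 m q • Lgen p n + eta4 n p • Lgen m q - eta4 m p • Lgen n q := by
  simp only [Lgen, eta4, lie_Mgen]
  rw [Mgen_swap m.castSucc p.castSucc, Mgen_swap n.castSucc p.castSucc]
  module

theorem lie_Lgen_Pgen (m n p : Fin 4) :
    ⁅Lgen m n, Pgen t p⁆ = eta4 n p • Pgen t m - eta4 m p • Pgen t n := by
  simp only [Lgen, Pgen, eta4, Ring.lie_smul, lie_Mgen, Ghat_castSucc_four]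
  module

theorem lie_Pgen_Pgen (m p : Fin 4) : ⁅Pgen t m, Pgen t p⁆ = -(t ^ 6) • Lgen m p := by
  simp only [Lgen, Pgen, Ring.smul_lie, Ring.lie_smul, lie_Mgen, Ghat_castSucc_four,
    Ghat_four_castSucc, Ghat_four_four, Mgen_self]
  module

theorem lie_Lgen_V2gen (m n p q : Fin 4) : ⁅Lgen m n, V2gen t p q⁆ =
    eta4 n q • V2gen t p m - eta4 m q • V2gen t p n + eta4 n p • V2gen t m q -
      eta4 m p • V2gen t n q := by
  simp only [Lgen, V2gen, eta4, Ring.lie_smul, lie_Mgen]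
  rw [Mgen_swap m.castSucc p.castSucc, Mgen_swap n.castSucc p.castSucc]
  module

theorem lie_Lgen_V1gen (m n p : Fin 4) :
    ⁅Lgen m n, V1gen t p⁆ = eta4 n p • V1gen t m - eta4 m p • V1gen t n := by
  simp only [Lgen, V1gen, eta4, Ring.lie_smul, lie_Mgen, Ghat_castSucc_four]
  module

theorem lie_Pgen_V2gen (m p q : Fin 4) :
    ⁅Pgen t m, V2gen t p q⁆ = t ^ 3 • (eta4 m p • V1gen t q - eta4 m q • V1gen t p) := by
  simp only [Pgen, V1gen, V2gen, eta4, Ring.smul_lie, Ring.lie_smul, lie_Mgen,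
    Ghat_four_castSucc]
  rw [Mgen_swap p.castSucc 4, Mgen_swap q.castSucc 4]
  module

theorem lie_Pgen_V1gen (m p : Fin 4) : ⁅Pgen t m, V1gen t p⁆ = -(t ^ 3) • V2gen t m p := by
  simp only [Pgen, V1gen, V2gen, Ring.smul_lie, Ring.lie_smul, lie_Mgen, Ghat_castSucc_four,
    Ghat_four_castSucc, Ghat_four_four, Mgen_self]
  module

theorem muSO23_V2gen_V2gen_V2gen (m n p q r s : Fin 4) :
    muSO23 (V2gen t m n) (V2gen t p q) (V2gen t r s) =
      t ^ 3 • ((eta4 m p * eta4 n q - eta4 m q * eta4 n p) • Lgen r s +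
        (eta4 m r * eta4 n s - eta4 m s * eta4 n r) • Lgen p q +
        (eta4 p r * eta4 q s - eta4 p s * eta4 q r) • Lgen m n) := by
  simp only [V2gen, Lgen, eta4, muSO23_smul_smul_smul]
  simp only [muSO23, Bso5_Mgen, Ghat_isSymm.apply]
  module

theorem muSO23_V2gen_V2gen_V1gen (m n p q r : Fin 4) :
    muSO23 (V2gen t m n) (V2gen t p q) (V1gen t r) =
      (eta4 m p * eta4 n q - eta4 m q * eta4 n p) • Pgen t r := by
  simp only [V2gen, V1gen, Pgen, eta4, muSO23_smul_smul_smul]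
  simp only [muSO23, Bso5_Mgen, Ghat_isSymm.apply, Ghat_castSucc_four]
  module

theorem muSO23_V2gen_V1gen_V1gen (m n p r : Fin 4) :
    muSO23 (V2gen t m n) (V1gen t p) (V1gen t r) = (t ^ 3 * eta4 p r) • Lgen m n := by
  simp only [V2gen, V1gen, Lgen, eta4, muSO23_smul_smul_smul]
  simp only [muSO23, Bso5_Mgen, Ghat_isSymm.apply, Ghat_castSucc_four, Ghat_four_four]
  module

theorem muSO23_V1gen_V1gen_V1gen (m p r : Fin 4) :
    muSO23 (V1gen t m) (V1gen t p) (V1gen t r) =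
      eta4 m p • Pgen t r + eta4 m r • Pgen t p + eta4 p r • Pgen t m := by
  simp only [V1gen, Pgen, eta4, muSO23_smul_smul_smul]
  simp only [muSO23, Bso5_Mgen, Ghat_isSymm.apply, Ghat_castSucc_four, Ghat_four_four]
  module

end Contraction

/-- The Inönü–Wigner contraction of the order-3 algebra `so(2,3) ⊕ ad so(2,3)`
(3-bracket `μ(x,y,z) = B(x,y)z + B(y,z)x + B(z,x)y`, `B(x,y) = −(1/2)Tr(xy)`, the action
of `g₀` on `g₁` being the adjoint one): for `t ≠ 0`, in the rescaled basis
`L_{mn} = M_{mn}`, `P_m = t³M_{m4}`, `V_{mn} = tJ_{mn}`, `V_m = tJ_{m4}`, every bracket,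
module action and 3-bracket has coefficients polynomial in `t` whose values at `t = 0`
are the brackets of the contracted algebra (lege-mica): the Lorentz brackets are
unchanged, `[P_m,P_p] = −t⁶L_{mp} → 0`, `P_m·V_{pq} → 0`, `P_m·V_p → 0`,
`μ(V_{mn},V_{pq},V_{rs}) → 0`, `μ(V_{mn},V_p,V_r) → 0`, while
`μ(V_{mn},V_{pq},V_r) = (η_{mp}η_{nq} − η_{mq}η_{np})P_r` and
`μ(V_m,V_p,V_r) = η_{mp}P_r + η_{mr}P_p + η_{pr}P_m` hold exactly. -/
theorem so23_contraction_to_poincare_order3 :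
    ∀ t : ℝ, t ≠ 0 →
      -- Lorentz brackets unchanged
      (∀ m n p q : Fin 4, ⁅Lgen m n, Lgen p q⁆ =
        eta4 n q • Lgen p m - eta4 m q • Lgen p n + eta4 n p • Lgen m q -
          eta4 m p • Lgen n q) ∧
      (∀ m n p : Fin 4, ⁅Lgen m n, Pgen t p⁆ = eta4 n p • Pgen t m - eta4 m p • Pgen t n) ∧
      -- [P_m, P_p] = −t⁶ L_{mp} → 0
      (∀ m p : Fin 4, ⁅Pgen t m, Pgen t p⁆ = -(t ^ 6) • Lgen m p) ∧
      -- action of the Lorentz generators on g₁ unchanged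
      (∀ m n p q : Fin 4, ⁅Lgen m n, V2gen t p q⁆ =
        eta4 n q • V2gen t p m - eta4 m q • V2gen t p n + eta4 n p • V2gen t m q -
          eta4 m p • V2gen t n q) ∧
      (∀ m n p : Fin 4, ⁅Lgen m n, V1gen t p⁆ =
        eta4 n p • V1gen t m - eta4 m p • V1gen t n) ∧
      -- P_m · V_{pq} → 0 and P_m · V_p → 0 (coefficients vanishing at t = 0)
      (∀ m p q : Fin 4, ⁅Pgen t m, V2gen t p q⁆ =
        t ^ 3 • (eta4 m p • V1gen t q - eta4 m q • V1gen t p)) ∧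
      (∀ m p : Fin 4, ⁅Pgen t m, V1gen t p⁆ = -(t ^ 3) • V2gen t m p) ∧
      -- μ(V_{mn},V_{pq},V_{rs}) → 0
      (∀ m n p q r s : Fin 4, muSO23 (V2gen t m n) (V2gen t p q) (V2gen t r s) =
        t ^ 3 • ((eta4 m p * eta4 n q - eta4 m q * eta4 n p) • Lgen r s +
          (eta4 m r * eta4 n s - eta4 m s * eta4 n r) • Lgen p q +
          (eta4 p r * eta4 q s - eta4 p s * eta4 q r) • Lgen m n)) ∧
      -- μ(V_{mn},V_{pq},V_r) = (η_{mp}η_{nq} − η_{mq}η_{np}) P_r exactly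
      (∀ m n p q r : Fin 4, muSO23 (V2gen t m n) (V2gen t p q) (V1gen t r) =
        (eta4 m p * eta4 n q - eta4 m q * eta4 n p) • Pgen t r) ∧
      -- μ(V_{mn},V_p,V_r) → 0
      (∀ m n p r : Fin 4, muSO23 (V2gen t m n) (V1gen t p) (V1gen t r) =
        (t ^ 3 * eta4 p r) • Lgen m n) ∧
      -- μ(V_m,V_p,V_r) = η_{mp}P_r + η_{mr}P_p + η_{pr}P_m exactly
      (∀ m p r : Fin 4, muSO23 (V1gen t m) (V1gen t p) (V1gen t r) =
        eta4 m p • Pgen t r + eta4 m r • Pgen t p + eta4 p r • Pgen t m) := by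
  intro t _
  exact ⟨lie_Lgen_Lgen, lie_Lgen_Pgen t, lie_Pgen_Pgen t, lie_Lgen_V2gen t, lie_Lgen_V1gen t,
    lie_Pgen_V2gen t, lie_Pgen_V1gen t, muSO23_V2gen_V2gen_V2gen t, muSO23_V2gen_V2gen_V1gen t,
    muSO23_V2gen_V1gen_V1gen t, muSO23_V1gen_V1gen_V1gen t⟩
end
end
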